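/- arXiv:2407.19049 — 14 statements merged into one kernel-verified Lean document; each statement's English description precedes it below -/
import Mathlib

section
/- For any vectors x, y in ℝ^n and any complex numbers α, β, the inequality ‖αx + βy‖₁ ≤ ((|α| + |β| + |α+β|)/2) · max{‖x‖₁, ‖y‖₁, ‖x−y‖₁} holds, where ‖·‖₁ denotes the ℓ¹-norm on ℝ^n (with x, y viewed as vectors in ℂ^n when forming αx + βy). -/
/-!
Each coordinate `(a, b)` of `(x, y)` splits the vector `a • α + b • β` along `α`, `β` and `α + β`:
when `a` and `b` have opposite signs use it as it stands, where `|a| + |b| = |a - b|`; when they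
have the same sign and `|b| ≤ |a|`, write it as `(a - b) • α + b • (α + β)`, where
`|a - b| + |b| = |a|`. Summing, the masses `P, Q, m` carried by `α, β, α + β` satisfy
`P + m ≤ ‖x‖₁`, `Q + m ≤ ‖y‖₁`, `P + Q ≤ ‖x - y‖₁`, and with `u, v, w` the norms of `α, β, α + β`
and `M` the maximum of the three ℓ¹ norms,
`(u + v + w) M - 2 (u P + v Q + w m)
  = (v + w - u)(M - Q - m) + (u + w - v)(M - P - m) + (u + v - w)(M - P - Q)`,
which is nonnegative by the triangle inequality.
-/

lemma mul_add_mul_add_mul_le_of_triangle {u v w P Q m M : ℝ}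
    (hu : u ≤ v + w) (hv : v ≤ u + w) (hw : w ≤ u + v)
    (hPm : P + m ≤ M) (hQm : Q + m ≤ M) (hPQ : P + Q ≤ M) :
    u * P + v * Q + w * m ≤ (u + v + w) / 2 * M := by
  nlinarith [mul_nonneg (sub_nonneg.2 hu) (sub_nonneg.2 hQm),
    mul_nonneg (sub_nonneg.2 hv) (sub_nonneg.2 hPm), mul_nonneg (sub_nonneg.2 hw) (sub_nonneg.2 hPQ)]

lemma abs_sub_eq_abs_add_abs_of_mul_nonpos {a b : ℝ} (h : a * b ≤ 0) : |a - b| = |a| + |b| := by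
  rcases le_total 0 a with ha | ha <;> rcases le_total 0 b with hb | hb <;>
    rcases le_total 0 (a - b) with hd | hd <;>
    simp only [abs_of_nonneg, abs_of_nonpos, ha, hb, hd] <;> nlinarith

lemma abs_sub_add_abs_eq_abs_of_mul_nonneg {a b : ℝ} (h : 0 ≤ a * b) (hba : |b| ≤ |a|) :
    |a - b| + |b| = |a| := by
  rcases le_total 0 a with ha | ha <;> rcases le_total 0 b with hb | hb <;>
    rcases le_total 0 (a - b) with hd | hd <;>
    simp only [abs_of_nonneg, abs_of_nonpos, ha, hb, hd] at hba ⊢ <;> nlinarith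

section NormedSpace

variable {E : Type*} [SeminormedAddCommGroup E] [NormedSpace ℝ E]

lemma exists_norm_smul_add_smul_le (α β : E) (a b : ℝ) :
    ∃ p q m : ℝ, ‖a • α + b • β‖ ≤ ‖α‖ * p + ‖β‖ * q + ‖α + β‖ * m ∧
      p + m ≤ |a| ∧ q + m ≤ |b| ∧ p + q ≤ |a - b| := by
  wlog hba : |b| ≤ |a| generalizing α β a b
  · obtain ⟨q, p, m, hle, hqm, hpm, hqp⟩ := this β α b a (le_of_not_ge hba)
    refine ⟨p, q, m, ?_, hpm, hqm, ?_⟩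
    · rw [add_comm (a • α), add_comm α]; linarith
    · rw [abs_sub_comm]; linarith
  rcases le_total (a * b) 0 with hab | hab
  · refine ⟨|a|, |b|, 0, ?_, by simp, by simp, (abs_sub_eq_abs_add_abs_of_mul_nonpos hab).ge⟩
    calc ‖a • α + b • β‖ ≤ ‖a • α‖ + ‖b • β‖ := norm_add_le _ _
      _ = ‖α‖ * |a| + ‖β‖ * |b| + ‖α + β‖ * 0 := by
        rw [norm_smul, norm_smul, Real.norm_eq_abs, Real.norm_eq_abs]; ring
  · refine ⟨|a - b|, 0, |b|, ?_, (abs_sub_add_abs_eq_abs_of_mul_nonneg hab hba).le, by simp, by simp⟩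
    calc ‖a • α + b • β‖ = ‖(a - b) • α + b • (α + β)‖ := by
          rw [sub_smul, smul_add]; abel_nf
      _ ≤ ‖(a - b) • α‖ + ‖b • (α + β)‖ := norm_add_le _ _
      _ = ‖α‖ * |a - b| + ‖β‖ * 0 + ‖α + β‖ * |b| := by
        rw [norm_smul, norm_smul, Real.norm_eq_abs, Real.norm_eq_abs]; ring

theorem sum_norm_smul_add_smul_le {ι : Type*} (s : Finset ι) (α β : E) (x y : ι → ℝ) :
    ∑ j ∈ s, ‖x j • α + y j • β‖ ≤ (‖α‖ + ‖β‖ + ‖α + β‖) / 2 *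
      max (∑ j ∈ s, |x j|) (max (∑ j ∈ s, |y j|) (∑ j ∈ s, |x j - y j|)) := by
  choose p q m hle hpm hqm hpq using fun j => exists_norm_smul_add_smul_le α β (x j) (y j)
  have hsum : ∑ j ∈ s, ‖x j • α + y j • β‖ ≤
      ‖α‖ * ∑ j ∈ s, p j + ‖β‖ * ∑ j ∈ s, q j + ‖α + β‖ * ∑ j ∈ s, m j := by
    simp only [Finset.mul_sum, ← Finset.sum_add_distrib]
    exact Finset.sum_le_sum fun j _ => hle j
  refine hsum.trans (mul_add_mul_add_mul_le_of_triangle ?_ ?_ (norm_add_le α β) ?_ ?_ ?_)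
  · linarith [show ‖α‖ ≤ ‖α + β‖ + ‖β‖ by simpa using norm_sub_le (α + β) β]
  · linarith [show ‖β‖ ≤ ‖α + β‖ + ‖α‖ by simpa using norm_sub_le (α + β) α]
  · rw [← Finset.sum_add_distrib]
    exact (Finset.sum_le_sum fun j _ => hpm j).trans (le_max_left _ _)
  · rw [← Finset.sum_add_distrib]
    exact (Finset.sum_le_sum fun j _ => hqm j).trans ((le_max_left _ _).trans (le_max_right _ _))
  · rw [← Finset.sum_add_distrib]
    exact (Finset.sum_le_sum fun j _ => hpq j).trans ((le_max_right _ _).trans (le_max_right _ _))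

end NormedSpace

/-- For vectors `x, y ∈ ℝ^n` and complex numbers `α, β`,
`‖αx + βy‖₁ ≤ ((|α| + |β| + |α+β|)/2) · max {‖x‖₁, ‖y‖₁, ‖x−y‖₁}`. -/
theorem stmt0 (n : ℕ) (x y : Fin n → ℝ) (α β : ℂ) :
    ∑ j, ‖α * (x j : ℂ) + β * (y j : ℂ)‖ ≤
      ((‖α‖ + ‖β‖ + ‖α + β‖) / 2) *
        max (∑ j, |x j|) (max (∑ j, |y j|) (∑ j, |x j - y j|)) := by
  simp only [mul_comm α, mul_comm β, Complex.real_smul.symm]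
  exact sum_norm_smul_add_smul_le Finset.univ α β x y
end

section
/- Let ν₁ and ν₂ be finite signed (real-valued) measures on a measurable space X. Then for all complex numbers α, β: ‖αν₁ + βν₂‖ ≤ ((|α| + |β| + |α+β|)/2) · max{‖ν₁‖, ‖ν₂‖, ‖ν₁ − ν₂‖}, where ‖μ‖ = |μ|(X) is the total variation norm (with αν₁ + βν₂ a complex measure). -/
/-!
For real `a, b`, writing `a α + b β` as itself, as `b (α + β) + (a - b) α` and as
`a (α + β) + (b - a) β`, the triangle inequality gives three bounds on `‖a α + b β‖`; whatever
the signs of `a`, `b`, `a - b`, one of them is at most `c₁ |a| + c₂ |b| + c₃ |a - b|`, where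
`c₁ = (|α| + |α + β| - |β|) / 2`, `c₂ = (|β| + |α + β| - |α|) / 2`,
`c₃ = (|α| + |β| - |α + β|) / 2` are nonnegative and sum to `(|α| + |β| + |α + β|) / 2`.
Taking `a = ν₁ E`, `b = ν₂ E` and summing over a disjoint measurable family, each of the three
resulting sums is at most `max {‖ν₁‖, ‖ν₂‖, ‖ν₁ - ν₂‖}`.
-/

open MeasureTheory

/-- The complex vector measure obtained from a finite signed (real) measure. -/
noncomputable def toCplx {X : Type*} [MeasurableSpace X]
    (ν : SignedMeasure X) : VectorMeasure X ℂ :=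
  ν.mapRange Complex.ofRealHom.toAddMonoidHom Complex.continuous_ofReal

/-- Total variation norm of a complex measure, as the supremum of `∑ ‖μ(Eᵢ)‖` over finite
families of pairwise disjoint measurable sets. -/
noncomputable def cplxTV {X : Type*} [MeasurableSpace X] (μ : VectorMeasure X ℂ) : ℝ :=
  ⨆ P : {P : Finset (Set X) // (∀ s ∈ P, MeasurableSet s) ∧
      (P : Set (Set X)).PairwiseDisjoint id}, ∑ s ∈ P.1, ‖μ s‖

section Pointwise

variable {E : Type*} [SeminormedAddCommGroup E] [NormedSpace ℝ E]

theorem norm_smul_add_smul_le_abs_mul (u v : E) (a b : ℝ) :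
    ‖a • u + b • v‖ ≤ |a| * ‖u‖ + |b| * ‖v‖ :=
  (norm_add_le _ _).trans_eq <| by rw [norm_smul, norm_smul, Real.norm_eq_abs, Real.norm_eq_abs]

theorem norm_smul_add_smul_le (u v : E) (a b : ℝ) :
    ‖a • u + b • v‖ ≤
      (‖u‖ + ‖u + v‖ - ‖v‖) / 2 * |a| + (‖v‖ + ‖u + v‖ - ‖u‖) / 2 * |b| +
        (‖u‖ + ‖v‖ - ‖u + v‖) / 2 * |a - b| := by
  have h₁ : ‖a • u + b • v‖ ≤ |b| * ‖u + v‖ + |a - b| * ‖u‖ := by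
    rw [show a • u + b • v = b • (u + v) + (a - b) • u by module]
    exact norm_smul_add_smul_le_abs_mul _ _ _ _
  have h₂ : ‖a • u + b • v‖ ≤ |a| * ‖u + v‖ + |a - b| * ‖v‖ := by
    rw [show a • u + b • v = a • (u + v) + (b - a) • v by module, abs_sub_comm a b]
    exact norm_smul_add_smul_le_abs_mul _ _ _ _
  have h₃ := norm_smul_add_smul_le_abs_mul u v a b
  have t₁ := norm_add_le u v
  have t₂ := norm_le_add_norm_add u v
  have t₃ := norm_le_add_norm_add' u v
  rcases abs_cases a with ⟨ha, _⟩ | ⟨ha, _⟩ <;>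
    rcases abs_cases b with ⟨hb, _⟩ | ⟨hb, _⟩ <;>
    rcases abs_cases (a - b) with ⟨hab, _⟩ | ⟨hab, _⟩ <;>
    simp only [ha, hb, hab] at h₁ h₂ h₃ ⊢ <;> linarith

end Pointwise

namespace MeasureTheory.SignedMeasure

variable {X : Type*} [MeasurableSpace X]

theorem sum_abs_le_totalVariation_real_univ (ν : SignedMeasure X) {P : Finset (Set X)}
    (hm : ∀ s ∈ P, MeasurableSet s) (hd : (P : Set (Set X)).PairwiseDisjoint id) :
    ∑ s ∈ P, |ν s| ≤ ν.totalVariation.real Set.univ :=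
  calc ∑ s ∈ P, |ν s| ≤ ∑ s ∈ P, ν.totalVariation.real s :=
        Finset.sum_le_sum fun s _ => ν.norm_le_totalVariation s
    _ = ν.totalVariation.real (⋃ s ∈ P, s) := (measureReal_biUnion_finset hd hm).symm
    _ ≤ ν.totalVariation.real Set.univ := measureReal_mono (Set.subset_univ _)

end MeasureTheory.SignedMeasure

section ComplexTotalVariation

variable {X : Type*} [MeasurableSpace X]

theorem norm_toCplx_apply (ν : SignedMeasure X) (s : Set X) : ‖toCplx ν s‖ = |ν s| :=
  Complex.norm_real _

theorem toCplx_smul_add_smul_apply (ν₁ ν₂ : SignedMeasure X) (α β : ℂ) (s : Set X) :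
    (α • toCplx ν₁ + β • toCplx ν₂) s = ν₁ s • α + ν₂ s • β := by
  rw [Complex.real_smul, Complex.real_smul, mul_comm _ α, mul_comm _ β]
  rfl

theorem cplxTV_nonneg (μ : VectorMeasure X ℂ) : 0 ≤ cplxTV μ :=
  Real.iSup_nonneg fun _ => Finset.sum_nonneg fun _ _ => norm_nonneg _

theorem sum_abs_le_cplxTV_toCplx (ν : SignedMeasure X)
    (P : {P : Finset (Set X) // (∀ s ∈ P, MeasurableSet s) ∧
      (P : Set (Set X)).PairwiseDisjoint id}) :
    ∑ s ∈ P.1, |ν s| ≤ cplxTV (toCplx ν) := by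
  simp only [cplxTV, ← norm_toCplx_apply]
  refine le_ciSup (f := fun Q : Subtype _ => ∑ s ∈ Q.1, ‖toCplx ν s‖)
    ⟨ν.totalVariation.real Set.univ, ?_⟩ P
  rintro _ ⟨Q, rfl⟩
  simpa only [norm_toCplx_apply] using ν.sum_abs_le_totalVariation_real_univ Q.2.1 Q.2.2

end ComplexTotalVariation

/-- for finite signed measures `ν₁, ν₂` and complex `α, β`,
`‖αν₁ + βν₂‖ ≤ ((|α| + |β| + |α+β|)/2) · max {‖ν₁‖, ‖ν₂‖, ‖ν₁ − ν₂‖}`. -/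
theorem stmt1 {X : Type*} [MeasurableSpace X] (ν₁ ν₂ : SignedMeasure X) (α β : ℂ) :
    cplxTV (α • toCplx ν₁ + β • toCplx ν₂) ≤
      ((‖α‖ + ‖β‖ + ‖α + β‖) / 2) *
        max (cplxTV (toCplx ν₁)) (max (cplxTV (toCplx ν₂)) (cplxTV (toCplx (ν₁ - ν₂)))) := by
  set M := max (cplxTV (toCplx ν₁)) (max (cplxTV (toCplx ν₂)) (cplxTV (toCplx (ν₁ - ν₂))))
  set c₁ := (‖α‖ + ‖α + β‖ - ‖β‖) / 2 with c₁_def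
  set c₂ := (‖β‖ + ‖α + β‖ - ‖α‖) / 2 with c₂_def
  set c₃ := (‖α‖ + ‖β‖ - ‖α + β‖) / 2 with c₃_def
  have hc₁ : 0 ≤ c₁ := by linarith [norm_le_add_norm_add' α β]
  have hc₂ : 0 ≤ c₂ := by linarith [norm_le_add_norm_add α β]
  have hc₃ : 0 ≤ c₃ := by linarith [norm_add_le α β]
  refine Real.iSup_le (fun P => ?_) (by positivity [cplxTV_nonneg (toCplx ν₁)])
  calc ∑ s ∈ P.1, ‖(α • toCplx ν₁ + β • toCplx ν₂) s‖
      ≤ ∑ s ∈ P.1, (c₁ * |ν₁ s| + c₂ * |ν₂ s| + c₃ * |(ν₁ - ν₂) s|) := by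
        gcongr with s
        rw [toCplx_smul_add_smul_apply, sub_apply]
        exact norm_smul_add_smul_le α β (ν₁ s) (ν₂ s)
    _ = c₁ * ∑ s ∈ P.1, |ν₁ s| + c₂ * ∑ s ∈ P.1, |ν₂ s| + c₃ * ∑ s ∈ P.1, |(ν₁ - ν₂) s| := by
        simp only [Finset.sum_add_distrib, Finset.mul_sum]
    _ ≤ c₁ * M + c₂ * M + c₃ * M := by
        gcongr
        · exact (sum_abs_le_cplxTV_toCplx ν₁ P).trans (le_max_left _ _)
        · exact (sum_abs_le_cplxTV_toCplx ν₂ P).trans ((le_max_left _ _).trans (le_max_right _ _))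
        · exact (sum_abs_le_cplxTV_toCplx _ P).trans ((le_max_right _ _).trans (le_max_right _ _))
    _ = (‖α‖ + ‖β‖ + ‖α + β‖) / 2 * M := by ring
end

section
/- Let μ₁, μ₂, μ₃ be finite signed (real-valued) Borel measures on a compact Hausdorff space X, and let f : X → ℂ be continuous with sup_{x∈X} |f(x)| ≤ 1. Then there exists λ ∈ ℂ such that |∫ f dμ_j − λ| ≤ (1/2) max_{j,k} ‖μ_j − μ_k‖ for j = 1, 2, 3. -/
/-!
Write `μⱼ = gⱼ σ` with `σ = ∑ⱼ |μⱼ|`. Then `∫ f dμⱼ = ∫ gⱼ f dσ` and `‖μⱼ - μₖ‖ = ‖gⱼ - gₖ‖₁`,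
and integration against `f` is `1`-Lipschitz on `L¹(σ)`, so it suffices to find `h ∈ L¹(σ)`
within `D / 2` of every `gⱼ`, where `D = maxⱼₖ ‖gⱼ - gₖ‖₁`. The pointwise median `m` of
`g₀, g₁, g₂` lies between any two of them, so `‖gⱼ - m‖₁ + ‖gₖ - m‖₁ = ‖gⱼ - gₖ‖₁ ≤ D`.
If the `gᵢ` farthest from `m` is at distance more than `D / 2`, move from `gᵢ` towards `m`
by `D / 2`: the other `gₖ` stay within `D / 2` of the new point.
-/

open MeasureTheory

/-- The complex integral of `f` against a finite signed measure `μ`, via the Jordan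
decomposition `μ = μ⁺ − μ⁻`. -/
noncomputable def signedIntegral {X : Type*} [MeasurableSpace X] (f : X → ℂ)
    (μ : SignedMeasure X) : ℂ :=
  (∫ x, f x ∂μ.toJordanDecomposition.posPart) - ∫ x, f x ∂μ.toJordanDecomposition.negPart

/-- Total variation norm of a finite signed measure. -/
noncomputable def tvNorm {X : Type*} [MeasurableSpace X] (μ : SignedMeasure X) : ℝ :=
  (μ.totalVariation Set.univ).toReal

open Set

def median3 {α : Type*} [Lattice α] (a b c : α) : α := a ⊓ b ⊔ a ⊓ c ⊔ b ⊓ c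

theorem median3_mem_uIcc {α : Type*} [Lattice α] (v : Fin 3 → α) {j k : Fin 3} (hjk : j ≠ k) :
    median3 (v 0) (v 1) (v 2) ∈ uIcc (v j) (v k) := by
  simp only [uIcc, mem_Icc, median3]
  fin_cases j <;> fin_cases k <;> simp at hjk ⊢ <;> order

theorem Real.dist_add_dist_of_mem_uIcc {a b c : ℝ} (h : c ∈ uIcc a b) :
    dist a c + dist b c = dist a b := by
  rw [dist_comm b c]
  exact dist_add_dist_of_mem_segment (segment_eq_uIcc a b ▸ h)

theorem exists_forall_norm_sub_le_of_add_le {ι E : Type*} [Finite ι]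
    [SeminormedAddCommGroup E] [NormedSpace ℝ E] (g : ι → E) (m : E) {r : ℝ} (hr : 0 ≤ r)
    (h : ∀ j k, j ≠ k → ‖g j - m‖ + ‖g k - m‖ ≤ 2 * r) :
    ∃ c, ∀ k, ‖g k - c‖ ≤ r := by
  rcases isEmpty_or_nonempty ι with hι | hι
  · exact ⟨m, isEmptyElim⟩
  obtain ⟨i, hi⟩ := Finite.exists_max fun k => ‖g k - m‖
  set A := ‖g i - m‖
  rcases le_or_gt A r with hA | hA
  · exact ⟨m, fun k => (hi k).trans hA⟩
  have hA0 : 0 < A := hr.trans_lt hA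
  refine ⟨g i + (r / A) • (m - g i), fun k => ?_⟩
  by_cases hk : k = i
  · subst hk
    rw [sub_add_cancel_left, norm_neg, norm_smul, norm_sub_rev,
      Real.norm_of_nonneg (by positivity), div_mul_cancel₀ _ hA0.ne']
  · calc ‖g k - (g i + (r / A) • (m - g i))‖
          = ‖(g k - m) + (1 - r / A) • (m - g i)‖ := by congr 1; module
        _ ≤ ‖g k - m‖ + (1 - r / A) * A := by
          grw [norm_add_le, norm_smul, norm_sub_rev m,
            Real.norm_of_nonneg (sub_nonneg.2 ((div_le_one hA0).2 hA.le))]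
        _ ≤ r := by
          have := h i k (Ne.symm hk)
          rw [sub_mul, div_mul_cancel₀ _ hA0.ne']
          linarith

section L1

variable {X : Type*} [MeasurableSpace X] {σ : Measure X}

theorem L1.integrable_dist (u v : X →₁[σ] ℝ) : Integrable (fun x => dist (u x) (v x)) σ := by
  simpa only [dist_eq_norm, Pi.sub_apply] using
    ((L1.integrable_coeFn u).sub (L1.integrable_coeFn v)).norm

theorem L1.dist_add_dist_of_ae_mem_uIcc {u v w : X →₁[σ] ℝ}
    (h : ∀ᵐ x ∂σ, w x ∈ uIcc (u x) (v x)) :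
    dist u w + dist v w = dist u v := by
  simp only [L1.dist_eq_integral_dist]
  rw [← integral_add (L1.integrable_dist u w) (L1.integrable_dist v w)]
  refine integral_congr_ae ?_
  filter_upwards [h] with x hx using Real.dist_add_dist_of_mem_uIcc hx

theorem L1.exists_forall_dist_le (F : Fin 3 → X →₁[σ] ℝ) {r : ℝ}
    (hF : ∀ j k, dist (F j) (F k) ≤ 2 * r) :
    ∃ H : X →₁[σ] ℝ, ∀ j, dist (F j) H ≤ r := by
  have hr : 0 ≤ r := by simpa using hF 0 0
  set M := median3 (F 0) (F 1) (F 2)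
  have hM : ∀ᵐ x ∂σ, M x = median3 (F 0 x) (F 1 x) (F 2 x) := by
    filter_upwards [Lp.coeFn_sup (F 0 ⊓ F 1 ⊔ F 0 ⊓ F 2) (F 1 ⊓ F 2),
      Lp.coeFn_sup (F 0 ⊓ F 1) (F 0 ⊓ F 2), Lp.coeFn_inf (F 0) (F 1), Lp.coeFn_inf (F 0) (F 2),
      Lp.coeFn_inf (F 1) (F 2)] with x h₁ h₂ h₃ h₄ h₅
    simp only [M, median3, h₁, Pi.sup_apply, h₂, h₃, h₄, h₅, Pi.inf_apply]
  obtain ⟨H, hH⟩ := exists_forall_norm_sub_le_of_add_le F M hr fun j k hjk => by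
    rw [← dist_eq_norm, ← dist_eq_norm, L1.dist_add_dist_of_ae_mem_uIcc]
    · exact hF j k
    · filter_upwards [hM] with x hx
      exact hx ▸ median3_mem_uIcc (F · x) hjk
  exact ⟨H, fun j => (dist_eq_norm _ _).trans_le (hH j)⟩

theorem L1.norm_integral_smul_sub_le {E : Type*} [NormedAddCommGroup E] [NormedSpace ℝ E]
    (u v : X →₁[σ] ℝ) {f : X → E} (hf : AEStronglyMeasurable f σ) {C : ℝ}
    (hfC : ∀ x, ‖f x‖ ≤ C) :
    ‖∫ x, u x • f x ∂σ - ∫ x, v x • f x ∂σ‖ ≤ C * dist u v := by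
  have hint : ∀ w : X →₁[σ] ℝ, Integrable (fun x => w x • f x) σ := fun w =>
    (L1.integrable_coeFn w).smul_bdd C hf (ae_of_all _ hfC)
  rw [← integral_sub (hint u) (hint v), L1.dist_eq_integral_dist, ← integral_const_mul]
  refine norm_integral_le_of_norm_le ((L1.integrable_dist u v).const_mul C) <|
    ae_of_all _ fun x => ?_
  rw [← sub_smul, norm_smul, dist_eq_norm, mul_comm]
  exact mul_le_mul_of_nonneg_right (hfC x) (norm_nonneg _)

end L1

section SignedMeasure

variable {X : Type*} [MeasurableSpace X]

theorem SignedMeasure.exists_eq_withDensityᵥ_L1 {ι : Type*} [Fintype ι]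
    (μ : ι → SignedMeasure X) :
    ∃ (σ : Measure X) (G : ι → X →₁[σ] ℝ), ∀ j, μ j = σ.withDensityᵥ (G j) := by
  set σ := ∑ j, (μ j).totalVariation
  have hac : ∀ j, μ j ≪ᵥ σ.toENNRealVectorMeasure := fun j => by
    rw [SignedMeasure.absolutelyContinuous_ennreal_iff,
      VectorMeasure.ennrealToMeasure_toENNRealVectorMeasure]
    exact Measure.absolutelyContinuous_of_le <| Finset.single_le_sum
      (f := fun j => (μ j).totalVariation) (fun _ _ => Measure.zero_le _) (Finset.mem_univ j)
  refine ⟨σ, fun j => (SignedMeasure.integrable_rnDeriv (μ j) σ).toL1 _, fun j => ?_⟩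
  conv_lhs => rw [← SignedMeasure.withDensityᵥ_rnDeriv_eq (μ j) σ (hac j)]
  exact (Integrable.withDensityᵥ_eq_iff (SignedMeasure.integrable_rnDeriv (μ j) σ)
    (L1.integrable_coeFn _)).2 (Integrable.coeFn_toL1 _).symm

variable {σ : Measure X}

theorem tvNorm_withDensityᵥ {g : X → ℝ} (hg : Integrable g σ) :
    tvNorm (σ.withDensityᵥ g) = ∫ x, ‖g x‖ ∂σ := by
  rw [tvNorm, SignedMeasure.totalVariation_eq_variation, Measure.variation_withDensityᵥ hg,
    withDensity_apply _ MeasurableSet.univ, Measure.restrict_univ,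
    integral_norm_eq_lintegral_enorm hg.aestronglyMeasurable]

theorem tvNorm_withDensityᵥ_sub (u v : X →₁[σ] ℝ) :
    tvNorm (σ.withDensityᵥ u - σ.withDensityᵥ v) = dist u v := by
  rw [← withDensityᵥ_sub (L1.integrable_coeFn u) (L1.integrable_coeFn v),
    tvNorm_withDensityᵥ ((L1.integrable_coeFn u).sub (L1.integrable_coeFn v)),
    L1.dist_eq_integral_dist]
  simp only [dist_eq_norm, Pi.sub_apply]

theorem posPart_negPart_toJordanDecomposition_withDensityᵥ {g : X → ℝ} (hgm : Measurable g)
    (hg : Integrable g σ) :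
    (SignedMeasure.toJordanDecomposition (σ.withDensityᵥ g)).posPart =
        σ.withDensity (fun x => .ofReal (g x)) ∧
      (SignedMeasure.toJordanDecomposition (σ.withDensityᵥ g)).negPart =
        σ.withDensity (fun x => .ofReal (-g x)) := by
  rw [SignedMeasure.toJordanDecomposition_eq_of_eq_add_withDensity hgm hg
    VectorMeasure.MutuallySingular.zero_left (zero_add _).symm]
  simp [SignedMeasure.toJordanDecomposition_zero]

theorem signedIntegral_withDensityᵥ {g : X → ℝ} (hgm : Measurable g) (hg : Integrable g σ)
    {f : X → ℂ} (hf : AEStronglyMeasurable f σ) (hgf : Integrable (fun x => g x • f x) σ) :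
    signedIntegral f (σ.withDensityᵥ g) = ∫ x, g x • f x ∂σ := by
  have hint : ∀ u : X → ℝ, Measurable u → (∀ x, |u x| ≤ |g x|) →
      Integrable (fun x => max (u x) 0 • f x) σ := fun u hu hug =>
    hgf.mono ((hu.max measurable_const).aestronglyMeasurable.smul hf) <| ae_of_all _ fun x => by
      rw [norm_smul, norm_smul, Real.norm_of_nonneg (le_max_right _ _), Real.norm_eq_abs]
      gcongr
      exact max_le ((le_abs_self _).trans (hug x)) (abs_nonneg _)
  obtain ⟨hpos, hneg⟩ := posPart_negPart_toJordanDecomposition_withDensityᵥ hgm hg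
  rw [signedIntegral, hpos, hneg,
    integral_withDensity_eq_integral_toReal_smul hgm.ennreal_ofReal
      (ae_of_all _ fun _ => ENNReal.ofReal_lt_top),
    integral_withDensity_eq_integral_toReal_smul hgm.fun_neg.ennreal_ofReal
      (ae_of_all _ fun _ => ENNReal.ofReal_lt_top)]
  simp only [ENNReal.toReal_ofReal']
  rw [← integral_sub (hint g hgm fun _ => le_rfl) (hint _ hgm.fun_neg fun _ => (abs_neg _).le)]
  congr 1 with x
  rw [← sub_smul, max_zero_sub_eq_self]

end SignedMeasure

theorem stmt2_general {X : Type*} [TopologicalSpace X]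
    [MeasurableSpace X] [BorelSpace X]
    (μ : Fin 3 → SignedMeasure X) (f : C(X, ℂ)) (hf : ∀ x, ‖f x‖ ≤ 1) :
    ∃ lam : ℂ, ∀ j, ‖signedIntegral f (μ j) - lam‖ ≤
      (1 / 2) * max (tvNorm (μ 0 - μ 1)) (max (tvNorm (μ 0 - μ 2)) (tvNorm (μ 1 - μ 2))) := by
  obtain ⟨σ, G, hG⟩ := SignedMeasure.exists_eq_withDensityᵥ_L1 μ
  have hfm : AEStronglyMeasurable f σ := f.continuous.aestronglyMeasurable
  simp only [hG, tvNorm_withDensityᵥ_sub]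
  obtain ⟨H, hH⟩ := L1.exists_forall_dist_le G
    (r := 1 / 2 * max (dist (G 0) (G 1)) (max (dist (G 0) (G 2)) (dist (G 1) (G 2))))
    fun j k => by
      fin_cases j <;> fin_cases k <;>
        simp [dist_comm (G 1) (G 0), dist_comm (G 2) (G 0), dist_comm (G 2) (G 1)]
  refine ⟨∫ x, H x • f x ∂σ, fun j => ?_⟩
  rw [signedIntegral_withDensityᵥ (Lp.stronglyMeasurable _).measurable (L1.integrable_coeFn _) hfm
    ((L1.integrable_coeFn (G j)).smul_bdd 1 hfm (ae_of_all _ hf))]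
  calc ‖∫ x, G j x • f x ∂σ - ∫ x, H x • f x ∂σ‖ ≤ 1 * dist (G j) H :=
        L1.norm_integral_smul_sub_le (G j) H hfm hf
    _ ≤ _ := (one_mul _).trans_le (hH j)

/-- given three finite signed Borel measures `μ₁, μ₂, μ₃` on a compact Hausdorff
space `X` and continuous `f : X → ℂ` with `|f| ≤ 1`, there is `λ ∈ ℂ` with
`|∫ f dμⱼ − λ| ≤ (1/2) maxⱼₖ ‖μⱼ − μₖ‖` for `j = 1, 2, 3`. -/
theorem stmt2 {X : Type*} [TopologicalSpace X] [CompactSpace X] [T2Space X]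
    [MeasurableSpace X] [BorelSpace X]
    (μ : Fin 3 → SignedMeasure X) (f : C(X, ℂ)) (hf : ∀ x, ‖f x‖ ≤ 1) :
    ∃ lam : ℂ, ∀ j, ‖signedIntegral f (μ j) - lam‖ ≤
      (1 / 2) * max (tvNorm (μ 0 - μ 1)) (max (tvNorm (μ 0 - μ 2)) (tvNorm (μ 1 - μ 2))) :=
  stmt2_general μ f hf
end

section
/- Let C_n = {(x,y) ∈ ℝ^n × ℝ^n : ‖x‖₁ ≤ 1, ‖y‖₁ ≤ 1, ‖x−y‖₁ ≤ 1}. If (x,y) ∈ C_n and there exist distinct indices j, k with x_j > 0, y_j > 0, x_k > 0, y_k > 0, then (x,y) is not an extreme point of C_n. -/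
/-!
Moving mass `t` from coordinate `k` to coordinate `j` of both `x` and `y` leaves `x - y` unchanged,
and as long as `|t|` does not exceed the four positive entries it also leaves `‖x‖₁` and `‖y‖₁`
unchanged. So `(x, y)` is the midpoint of two distinct points of `C_n`, obtained with `±t`.
-/

open Finset

theorem notMem_extremePoints_of_add_mem_of_sub_mem {𝕜 E : Type*} [Ring 𝕜] [LinearOrder 𝕜]
    [IsStrictOrderedRing 𝕜] [Invertible (2 : 𝕜)] [AddCommGroup E] [Module 𝕜 E] {A : Set E}
    {x v : E} (hv : v ≠ 0) (hadd : x + v ∈ A) (hsub : x - v ∈ A) : x ∉ A.extremePoints 𝕜 :=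
  fun hx ↦ hv (add_eq_left.1 (hx.2 hadd hsub (mem_openSegment_add_sub x v)))

section Transfer

variable {ι α : Type*} [DecidableEq ι] [AddCommGroup α] [LinearOrder α] [IsOrderedAddMonoid α]
  {z : ι → α} {j k : ι} {t : α}

theorem abs_add_single_sub_single_apply (hjk : j ≠ k) (hj : |t| ≤ z j) (hk : |t| ≤ z k)
    (i : ι) :
    |(z + (Pi.single j t - Pi.single k t : ι → α)) i| =
      |z i| + (Pi.single j t - Pi.single k t : ι → α) i := by
  have hzj : 0 ≤ z j := (abs_nonneg t).trans hj
  have hzk : 0 ≤ z k := (abs_nonneg t).trans hk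
  rcases eq_or_ne i j with rfl | hij
  · simp only [Pi.add_apply, Pi.sub_apply, Pi.single_eq_same, Pi.single_eq_of_ne hjk, sub_zero]
    rw [abs_of_nonneg hzj, abs_of_nonneg (neg_le_iff_add_nonneg.1 ((neg_le_abs t).trans hj))]
  rcases eq_or_ne i k with rfl | hik
  · simp only [Pi.add_apply, Pi.sub_apply, Pi.single_eq_same, Pi.single_eq_of_ne hij, zero_sub,
      ← sub_eq_add_neg]
    rw [abs_of_nonneg hzk, abs_of_nonneg (sub_nonneg.2 ((le_abs_self t).trans hk))]
  · simp [Pi.single_eq_of_ne hij, Pi.single_eq_of_ne hik]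

theorem sum_abs_add_single_sub_single [Fintype ι] (hjk : j ≠ k) (hj : |t| ≤ z j)
    (hk : |t| ≤ z k) : ∑ i, |(z + (Pi.single j t - Pi.single k t : ι → α)) i| = ∑ i, |z i| := by
  simp only [abs_add_single_sub_single_apply hjk hj hk, sum_add_distrib, Pi.sub_apply,
    sum_sub_distrib, sum_pi_single', mem_univ, if_true, sub_self, add_zero]

end Transfer

/-- if `(x,y) ∈ C_n = {(x,y) : ‖x‖₁ ≤ 1, ‖y‖₁ ≤ 1, ‖x−y‖₁ ≤ 1}` and there are
distinct indices `j, k` with `x_j, y_j, x_k, y_k > 0`, then `(x,y)` is not an extreme point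
of `C_n`. -/
theorem stmt3 (n : ℕ) (x y : Fin n → ℝ)
    (C : Set ((Fin n → ℝ) × (Fin n → ℝ)))
    (hC : C = {p | ∑ i, |p.1 i| ≤ 1 ∧ ∑ i, |p.2 i| ≤ 1 ∧ ∑ i, |p.1 i - p.2 i| ≤ 1})
    (hmem : (x, y) ∈ C)
    (j k : Fin n) (hjk : j ≠ k)
    (hxj : 0 < x j) (hyj : 0 < y j) (hxk : 0 < x k) (hyk : 0 < y k) :
    (x, y) ∉ C.extremePoints ℝ := by
  obtain ⟨hx, hy, hxy⟩ : (x, y) ∈ {p : (Fin n → ℝ) × (Fin n → ℝ) | _} := hC ▸ hmem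
  set t := min (min (x j) (y j)) (min (x k) (y k))
  have ht : 0 < t := by positivity
  obtain ⟨htxj, htyj, htxk, htyk⟩ : t ≤ x j ∧ t ≤ y j ∧ t ≤ x k ∧ t ≤ y k := by simp [t]
  let d : ℝ → Fin n → ℝ := fun s ↦ Pi.single j s - Pi.single k s
  have hshift : ∀ s, |s| ≤ t → (x, y) + (d s, d s) ∈ C := by
    intro s hs
    rw [hC]
    refine ⟨?_, ?_, ?_⟩
    · exact (sum_abs_add_single_sub_single hjk (hs.trans htxj) (hs.trans htxk)).trans_le hx
    · exact (sum_abs_add_single_sub_single hjk (hs.trans htyj) (hs.trans htyk)).trans_le hy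
    · simpa only [Prod.fst_add, Prod.snd_add, Pi.add_apply, add_sub_add_right_eq_sub] using hxy
  refine notMem_extremePoints_of_add_mem_of_sub_mem (v := (d t, d t)) ?_ (hshift t ?_) ?_
  · intro h
    have hdj := congr_fun (congrArg Prod.fst h) j
    simp [d, Pi.single_eq_of_ne hjk, ht.ne'] at hdj
  · rw [abs_of_pos ht]
  · have hneg : d (-t) = -d t := by simp only [d, Pi.single_neg, neg_sub_neg, neg_sub]
    rw [sub_eq_add_neg, Prod.neg_mk, ← hneg]
    exact hshift (-t) (by rw [abs_neg, abs_of_pos ht])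
end

section
/- Let C_n = {(x,y) ∈ ℝ^n × ℝ^n : ‖x‖₁ ≤ 1, ‖y‖₁ ≤ 1, ‖x−y‖₁ ≤ 1}. If (x,y) ∈ C_n and x has at least three non-zero coordinates, then (x,y) is not an extreme point of C_n. -/
/-!
Among the (at least three) coordinates where `x` is non-zero, two, `p ≠ q`, are of the same
type: either `x` and `y` have the same strict sign at both, or `x i * y i ≤ 0` at both. Moving a
small mass `t` from `q` to `p` along the signs of `x`, i.e. adding `t • d` with
`d = sign (x p) • e p - sign (x q) • e q`, leaves the ℓ¹-norm of every vector that has the signs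
of `x` at `p` and `q` unchanged. In the first case `(x, y) + t • (d, d)` keeps `‖x‖₁`, `‖y‖₁` and
`x - y`; in the second, `x - y` has the signs of `x` at `p` and `q`, so `(x, y) + t • (d, 0)` keeps
all three norms. Hence `(x, y)` is the midpoint of a non-degenerate segment in `C_n`.
-/

open Finset

theorem abs_add_mul_sign_self {a t : ℝ} (ht : |t| ≤ |a|) : |a + t * Real.sign a| = |a| + t := by
  rcases lt_trichotomy a 0 with ha | rfl | ha
  · rw [abs_of_neg ha] at ht
    rw [Real.sign_of_neg ha, abs_of_neg ha, abs_of_nonpos (by linarith [(abs_le.mp ht).1])]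
    ring
  · simp_all
  · rw [abs_of_pos ha] at ht
    rw [Real.sign_of_pos ha, abs_of_pos ha, abs_of_nonneg (by linarith [(abs_le.mp ht).1])]
    ring

theorem Real.sign_eq_sign_of_mul_pos {a b : ℝ} (h : 0 < a * b) : Real.sign a = Real.sign b := by
  rcases mul_pos_iff.mp h with ⟨ha, hb⟩ | ⟨ha, hb⟩
  · rw [Real.sign_of_pos ha, Real.sign_of_pos hb]
  · rw [Real.sign_of_neg ha, Real.sign_of_neg hb]

theorem Real.sign_sub_eq_sign_of_mul_nonpos {a b : ℝ} (ha : a ≠ 0) (h : a * b ≤ 0) :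
    Real.sign (a - b) = Real.sign a := by
  rcases ha.lt_or_gt with ha | ha
  · have hb : 0 ≤ b := nonneg_of_mul_nonpos_right h ha
    rw [Real.sign_of_neg ha, Real.sign_of_neg (by linarith)]
  · have hb : b ≤ 0 := nonpos_of_mul_nonpos_right h ha
    rw [Real.sign_of_pos ha, Real.sign_of_pos (by linarith)]

theorem abs_le_abs_sub_of_mul_nonpos {a b : ℝ} (h : a * b ≤ 0) : |a| ≤ |a - b| := by
  rcases abs_cases a with ⟨ha, _⟩ | ⟨ha, _⟩ <;>
    rcases abs_cases (a - b) with ⟨hab, _⟩ | ⟨hab, _⟩ <;> nlinarith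

theorem sum_abs_add_mul_mul_sign {ι : Type*} [Fintype ι] (u c : ι → ℝ) {t : ℝ}
    (h : ∀ i, |t * c i| ≤ |u i|) :
    ∑ i, |u i + t * (c i * Real.sign (u i))| = ∑ i, |u i| + t * ∑ i, c i := by
  simp_rw [← mul_assoc, abs_add_mul_sign_self (h _), sum_add_distrib, mul_sum]

section SignTransfer

variable {ι : Type*} [DecidableEq ι]

noncomputable def signTransfer (p q : ι) (u : ι → ℝ) : ι → ℝ :=
  fun i => (Pi.single p 1 - Pi.single q 1 : ι → ℝ) i * Real.sign (u i)

theorem sum_abs_add_mul_signTransfer [Fintype ι] {p q : ι} (hpq : p ≠ q) {u : ι → ℝ} {t : ℝ}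
    (hp : |t| ≤ |u p|) (hq : |t| ≤ |u q|) :
    ∑ i, |u i + t * signTransfer p q u i| = ∑ i, |u i| := by
  have hbound : ∀ i, |t * (Pi.single p 1 - Pi.single q 1 : ι → ℝ) i| ≤ |u i| := by
    intro i
    by_cases hip : i = p
    · subst hip; simpa [hpq] using hp
    by_cases hiq : i = q
    · subst hiq; simpa [hip] using hq
    simp [hip, hiq]
  simp only [signTransfer]
  rw [sum_abs_add_mul_mul_sign u _ hbound]
  simp [sum_sub_distrib]

theorem signTransfer_congr {p q : ι} {u v : ι → ℝ} (hp : Real.sign (u p) = Real.sign (v p))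
    (hq : Real.sign (u q) = Real.sign (v q)) : signTransfer p q u = signTransfer p q v := by
  funext i
  by_cases hip : i = p
  · subst hip; simp [signTransfer, hp]
  by_cases hiq : i = q
  · subst hiq; simp [signTransfer, hq]
  simp [signTransfer, hip, hiq]

theorem signTransfer_ne_zero {p q : ι} (hpq : p ≠ q) {u : ι → ℝ} (hp : u p ≠ 0) :
    signTransfer p q u ≠ 0 := by
  intro h
  have := congrFun h p
  simp [signTransfer, hpq, Real.sign_eq_zero_iff, hp] at this

end SignTransfer

theorem Set.exists_ne_and_iff_of_three_le_ncard {α : Type*} {s : Set α} (hs : 3 ≤ s.ncard)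
    (P : α → Prop) : ∃ p ∈ s, ∃ q ∈ s, p ≠ q ∧ (P p ↔ P q) := by
  have hfin : s.Finite := Set.finite_of_ncard_pos (by omega)
  have hsplit := Set.ncard_inter_add_ncard_sdiff_eq_ncard s {i | P i} hfin
  rcases (by omega : 1 < (s ∩ {i | P i}).ncard ∨ 1 < (s \ {i | P i}).ncard) with h | h
  · obtain ⟨p, ⟨hps, hp⟩, q, ⟨hqs, hq⟩, hpq⟩ := (Set.one_lt_ncard (hfin.inter_of_left _)).mp h
    exact ⟨p, hps, q, hqs, hpq, iff_of_true hp hq⟩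
  · obtain ⟨p, ⟨hps, hp⟩, q, ⟨hqs, hq⟩, hpq⟩ := (Set.one_lt_ncard hfin.sdiff).mp h
    exact ⟨p, hps, q, hqs, hpq, iff_of_false hp hq⟩

theorem notMem_extremePoints_of_forall_abs_le {𝕜 E : Type*} [Field 𝕜] [LinearOrder 𝕜]
    [IsStrictOrderedRing 𝕜] [AddCommGroup E] [Module 𝕜 E] {A : Set E} {z w : E} {ε : 𝕜}
    (hw : w ≠ 0) (hε : 0 < ε) (h : ∀ t : 𝕜, |t| ≤ ε → z + t • w ∈ A) :
    z ∉ A.extremePoints 𝕜 := by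
  intro hz
  have hseg : z ∈ openSegment 𝕜 (z + ε • w) (z + (-ε) • w) :=
    ⟨1 / 2, 1 / 2, by norm_num, by norm_num, by norm_num, by module⟩
  have := hz.2 (h ε (abs_of_pos hε).le) (h (-ε) (by rw [abs_neg, abs_of_pos hε])) hseg
  exact hw (smul_eq_zero.mp (add_eq_left.mp this) |>.resolve_left hε.ne')

/-- The body `C_n` of the paper, over an arbitrary finite index type. -/
def l1PairBody (ι : Type*) [Fintype ι] : Set ((ι → ℝ) × (ι → ℝ)) :=
  {p | ∑ i, |p.1 i| ≤ 1 ∧ ∑ i, |p.2 i| ≤ 1 ∧ ∑ i, |p.1 i - p.2 i| ≤ 1}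

section l1PairBody

variable {ι : Type*} [Fintype ι] [DecidableEq ι] {x y : ι → ℝ} {p q : ι}

theorem notMem_extremePoints_l1PairBody_of_mul_pos (hpq : p ≠ q) (hp : 0 < x p * y p)
    (hq : 0 < x q * y q) (hmem : (x, y) ∈ l1PairBody ι) :
    (x, y) ∉ (l1PairBody ι).extremePoints ℝ := by
  obtain ⟨hx, hy, hxy⟩ := hmem
  have hdy : signTransfer p q x = signTransfer p q y :=
    signTransfer_congr (Real.sign_eq_sign_of_mul_pos hp) (Real.sign_eq_sign_of_mul_pos hq)
  set d := signTransfer p q x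
  set ε := min (min |x p| |x q|) (min |y p| |y q|)
  have hε : 0 < ε := by
    simp only [ε, lt_min_iff, abs_pos]
    exact ⟨⟨left_ne_zero_of_mul hp.ne', left_ne_zero_of_mul hq.ne'⟩,
      ⟨right_ne_zero_of_mul hp.ne', right_ne_zero_of_mul hq.ne'⟩⟩
  refine notMem_extremePoints_of_forall_abs_le (w := (d, d))
    (fun h => signTransfer_ne_zero hpq (left_ne_zero_of_mul hp.ne') (congrArg Prod.fst h)) hε
    fun t ht => ⟨?_, ?_, ?_⟩
  · show ∑ i, |x i + t * d i| ≤ 1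
    rwa [sum_abs_add_mul_signTransfer hpq (ht.trans ((min_le_left _ _).trans (min_le_left _ _)))
      (ht.trans ((min_le_left _ _).trans (min_le_right _ _)))]
  · show ∑ i, |y i + t * d i| ≤ 1
    rwa [hdy, sum_abs_add_mul_signTransfer hpq
      (ht.trans ((min_le_right _ _).trans (min_le_left _ _)))
      (ht.trans ((min_le_right _ _).trans (min_le_right _ _)))]
  · show ∑ i, |x i + t * d i - (y i + t * d i)| ≤ 1
    simpa only [add_sub_add_right_eq_sub] using hxy

theorem notMem_extremePoints_l1PairBody_of_mul_nonpos (hpq : p ≠ q) (hxp : x p ≠ 0)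
    (hxq : x q ≠ 0) (hp : x p * y p ≤ 0) (hq : x q * y q ≤ 0) (hmem : (x, y) ∈ l1PairBody ι) :
    (x, y) ∉ (l1PairBody ι).extremePoints ℝ := by
  obtain ⟨hx, hy, hxy⟩ := hmem
  have hdxy : signTransfer p q x = signTransfer p q (x - y) :=
    signTransfer_congr (Real.sign_sub_eq_sign_of_mul_nonpos hxp hp).symm
      (Real.sign_sub_eq_sign_of_mul_nonpos hxq hq).symm
  set d := signTransfer p q x
  set ε := min |x p| |x q|
  have hε : 0 < ε := lt_min (abs_pos.mpr hxp) (abs_pos.mpr hxq)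
  refine notMem_extremePoints_of_forall_abs_le (w := (d, 0))
    (fun h => signTransfer_ne_zero hpq hxp (congrArg Prod.fst h)) hε fun t ht => ⟨?_, ?_, ?_⟩
  · show ∑ i, |x i + t * d i| ≤ 1
    rwa [sum_abs_add_mul_signTransfer hpq (ht.trans (min_le_left _ _))
      (ht.trans (min_le_right _ _))]
  · show ∑ i, |y i + t * 0| ≤ 1
    simpa only [mul_zero, add_zero] using hy
  · show ∑ i, |x i + t * d i - (y i + t * 0)| ≤ 1
    have hsplit : ∀ i, x i + t * d i - (y i + t * 0) = (x - y) i + t * d i := fun i => by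
      simp only [Pi.sub_apply]; ring
    simp only [hsplit]
    rwa [hdxy, sum_abs_add_mul_signTransfer hpq
      ((ht.trans (min_le_left _ _)).trans (abs_le_abs_sub_of_mul_nonpos hp))
      ((ht.trans (min_le_right _ _)).trans (abs_le_abs_sub_of_mul_nonpos hq))]

end l1PairBody

/-- if `(x,y) ∈ C_n = {(x,y) : ‖x‖₁ ≤ 1, ‖y‖₁ ≤ 1, ‖x−y‖₁ ≤ 1}` and `x` has at
least three non-zero coordinates, then `(x,y)` is not an extreme point of `C_n`. -/
theorem stmt4 (n : ℕ) (x y : Fin n → ℝ)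
    (C : Set ((Fin n → ℝ) × (Fin n → ℝ)))
    (hC : C = {p | ∑ i, |p.1 i| ≤ 1 ∧ ∑ i, |p.2 i| ≤ 1 ∧ ∑ i, |p.1 i - p.2 i| ≤ 1})
    (hmem : (x, y) ∈ C)
    (hx3 : 3 ≤ {i : Fin n | x i ≠ 0}.ncard) :
    (x, y) ∉ C.extremePoints ℝ := by
  subst hC
  obtain ⟨p, hp, q, hq, hpq, hsame⟩ :=
    Set.exists_ne_and_iff_of_three_le_ncard hx3 (fun i => 0 < x i * y i)
  by_cases hpos : 0 < x p * y p
  · exact notMem_extremePoints_l1PairBody_of_mul_pos hpq hpos (hsame.mp hpos) hmem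
  · exact notMem_extremePoints_l1PairBody_of_mul_nonpos hpq hp hq (not_lt.mp hpos)
      (not_lt.mp (mt hsame.mpr hpos)) hmem
end

section
/- Let K ⊆ ℂ be compact with at least two points, and let D be the (unique) closed disk of minimal radius containing K. Then K ∩ ∂D is not contained in any open arc of ∂D of length strictly smaller than half the circumference of D. Equivalently: K ∩ ∂D is not contained in any open half-plane whose boundary line passes through the center of D. -/
/-!
Moving the center from `c` to `c + ε u` cannot shrink the enclosing radius below `r`, so some
`z ∈ K` stays at distance at least `r` from `c + ε u`. Expanding `‖z - c - ε u‖²` shows that such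
a `z` lies within `ε ‖u‖` of the sphere `∂D` and has `⟪z - c, u⟫ ≤ ε ‖u‖² / 2`. A point of `K`
minimising `max (r - dist z c) ⟪z - c, u⟫` therefore lies on `∂D` with `⟪z - c, u⟫ ≤ 0`.
-/

open Metric Filter Topology

open scoped RealInnerProductSpace

theorem exists_mem_le_dist_of_forall_subset_closedBall {α : Type*} [PseudoMetricSpace α]
    {K : Set α} (hK : IsCompact K) {r : ℝ}
    (hmin : ∀ (c' : α) (r' : ℝ), K ⊆ closedBall c' r' → r ≤ r') (p : α) :
    ∃ z ∈ K, r ≤ dist z p := by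
  have hne : K.Nonempty := Set.nonempty_iff_ne_empty.2 fun hK₀ => by
    have := hmin p (r - 1) (by simp [hK₀])
    linarith
  obtain ⟨z, hzK, hzmax⟩ := hK.exists_isMaxOn hne (continuous_id.dist continuous_const).continuousOn
  exact ⟨z, hzK, hmin p _ fun y hy => mem_closedBall.2 (hzmax hy)⟩

section InnerProductSpace

variable {E : Type*} [NormedAddCommGroup E] [InnerProductSpace ℝ E]

theorem inner_sub_le_of_norm_sub_le_dist_add_smul {z c u : E} {r ε : ℝ} (hε : 0 < ε)
    (hz : ‖z - c‖ ≤ r) (hfar : r ≤ dist z (c + ε • u)) :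
    ⟪z - c, u⟫ ≤ ε * ‖u‖ ^ 2 / 2 := by
  have hsq : ‖z - (c + ε • u)‖ ^ 2 = ‖z - c‖ ^ 2 - 2 * ε * ⟪z - c, u⟫ + ε ^ 2 * ‖u‖ ^ 2 := by
    rw [sub_add_eq_sub_sub, norm_sub_sq_real, real_inner_smul_right, norm_smul,
      Real.norm_of_nonneg hε.le]
    ring
  rw [dist_eq_norm] at hfar
  have hr : 0 ≤ r := (norm_nonneg _).trans hz
  nlinarith [pow_le_pow_left₀ hr hfar 2, pow_le_pow_left₀ (norm_nonneg _) hz 2]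

theorem exists_mem_sphere_inner_nonpos_of_forall_subset_closedBall {K : Set E}
    (hK : IsCompact K) {c : E} {r : ℝ} (hsub : K ⊆ closedBall c r)
    (hmin : ∀ (c' : E) (r' : ℝ), K ⊆ closedBall c' r' → r ≤ r') (u : E) :
    ∃ z ∈ K ∩ sphere c r, ⟪z - c, u⟫ ≤ 0 := by
  set g : E → ℝ := fun z => max (r - dist z c) ⟪z - c, u⟫
  obtain ⟨x, hxK, hxmin⟩ := hK.exists_isMinOn
    ((exists_mem_le_dist_of_forall_subset_closedBall hK hmin c).imp fun _ h => h.1)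
    (by fun_prop : Continuous g).continuousOn
  have hsmall : ∀ ε > 0, g x ≤ ε * (‖u‖ + ‖u‖ ^ 2) := by
    intro ε hε
    obtain ⟨z, hzK, hfar⟩ := exists_mem_le_dist_of_forall_subset_closedBall hK hmin (c + ε • u)
    have hshift : dist z (c + ε • u) ≤ dist z c + ε * ‖u‖ := by
      simpa [norm_smul, Real.norm_of_nonneg hε.le] using dist_triangle z c (c + ε • u)
    have hinner := inner_sub_le_of_norm_sub_le_dist_add_smul hε
      (mem_closedBall_iff_norm.1 (hsub hzK)) hfar
    refine (hxmin hzK).trans (max_le ?_ ?_) <;> nlinarith [norm_nonneg u, sq_nonneg ‖u‖]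
  have hgx : g x ≤ 0 := by
    have hlim : Tendsto (fun ε : ℝ => ε * (‖u‖ + ‖u‖ ^ 2)) (𝓝[>] 0) (𝓝 0) := by
      refine tendsto_nhdsWithin_of_tendsto_nhds ?_
      simpa using (tendsto_id (x := 𝓝 (0 : ℝ))).mul_const (‖u‖ + ‖u‖ ^ 2)
    exact ge_of_tendsto hlim (eventually_nhdsWithin_of_forall hsmall)
  refine ⟨x, ⟨hxK, ?_⟩, le_of_max_le_right hgx⟩
  exact mem_sphere.2 (le_antisymm (hsub hxK) (by linarith [le_of_max_le_left hgx]))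

end InnerProductSpace

theorem stmt7_general (K : Set ℂ) (hK : IsCompact K)
    (c : ℂ) (r : ℝ) (hsub : K ⊆ Metric.closedBall c r)
    (hmin : ∀ (c' : ℂ) (r' : ℝ), K ⊆ Metric.closedBall c' r' → r ≤ r') :
    ¬ ∃ u : ℂ, ‖u‖ = 1 ∧
      ∀ z ∈ K ∩ Metric.sphere c r, 0 < ((z - c) * (starRingEnd ℂ) u).re := by
  rintro ⟨u, -, hpos⟩
  obtain ⟨z, hz, hinner⟩ :=
    exists_mem_sphere_inner_nonpos_of_forall_subset_closedBall hK hsub hmin u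
  rw [real_inner_comm, Complex.inner] at hinner
  exact (hpos z hz).not_ge hinner

/-- if `D = closedBall c r` is the minimal closed disk containing a compact set
`K ⊆ ℂ` with at least two points, then `K ∩ ∂D` is not contained in any open half-plane whose
boundary line passes through the center `c`: there is no unit vector `u` with
`Re((z − c)·conj u) > 0` for all `z ∈ K ∩ ∂D`. -/
theorem stmt7 (K : Set ℂ) (hK : IsCompact K) (hK2 : ∃ a ∈ K, ∃ b ∈ K, a ≠ b)
    (c : ℂ) (r : ℝ) (hsub : K ⊆ Metric.closedBall c r)
    (hmin : ∀ (c' : ℂ) (r' : ℝ), K ⊆ Metric.closedBall c' r' → r ≤ r') :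
    ¬ ∃ u : ℂ, ‖u‖ = 1 ∧
      ∀ z ∈ K ∩ Metric.sphere c r, 0 < ((z - c) * (starRingEnd ℂ) u).re :=
  stmt7_general K hK c r hsub hmin
end

section
/- Let K ⊆ ℂ be compact with at least two points, D its minimal enclosing closed disk with center c. If K ∩ ∂D = {a, b} consists of exactly two points, then a and b are antipodal, i.e., a + b = 2c. -/
/-! If `a + b ≠ 2c`, the vector `v = (a - c) + (b - c)` satisfies
`⟪a - c, v⟫ = ⟪b - c, v⟫ = ‖v‖² / 2 > 0`. Moving the centre from `c` a little in the direction `v`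
therefore brings it strictly closer to the points of `K` near the contact points `a, b`, while the
rest of `K` stays at distance bounded away from `r`; by compactness this gives an enclosing disk of
smaller radius. -/

open Metric Filter Topology RealInnerProductSpace

theorem IsCompact.exists_lt_subset_ball {α : Type*} [PseudoMetricSpace α] {s : Set α} {x : α}
    {r : ℝ} (hs : IsCompact s) (h : s ⊆ ball x r) : ∃ r' < r, s ⊆ ball x r' := by
  rcases s.eq_empty_or_nonempty with rfl | hne
  · exact ⟨r - 1, by linarith, Set.empty_subset _⟩
  obtain ⟨y, hys, hy⟩ : ∃ y ∈ s, s ⊆ closedBall x (dist y x) :=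
    hs.exists_isMaxOn hne (by fun_prop)
  obtain ⟨r', hyr', hr'r⟩ := exists_between (mem_ball.1 (h hys))
  exact ⟨r', hr'r, hy.trans (closedBall_subset_ball hyr')⟩

theorem real_inner_add_eq_half_norm_add_sq {E : Type*} [NormedAddCommGroup E]
    [InnerProductSpace ℝ E] {u w : E} (h : ‖u‖ = ‖w‖) : ⟪u, u + w⟫ = ‖u + w‖ ^ 2 / 2 := by
  rw [inner_add_right, real_inner_self_eq_norm_sq, norm_add_sq_real, h]
  ring

theorem norm_sub_add_smul_sq {E : Type*} [NormedAddCommGroup E]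
    [InnerProductSpace ℝ E] (x c v : E) (t : ℝ) :
    ‖x - (c + t • v)‖ ^ 2 = ‖x - c‖ ^ 2 - 2 * t * ⟪x - c, v⟫ + t ^ 2 * ‖v‖ ^ 2 := by
  rw [← sub_sub, norm_sub_sq_real, inner_smul_right, norm_smul, mul_pow, Real.norm_eq_abs, sq_abs]
  ring

theorem IsCompact.exists_lt_subset_closedBall_of_inner_pos {E : Type*} [NormedAddCommGroup E]
    [InnerProductSpace ℝ E] {K : Set E} (hK : IsCompact K) {c : E} {r : ℝ}
    (hsub : K ⊆ closedBall c r) (v : E) (hv : ∀ x ∈ K ∩ sphere c r, 0 < ⟪x - c, v⟫) :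
    ∃ c' r', r' < r ∧ K ⊆ closedBall c' r' := by
  have hcont : Continuous fun x => ⟪x - c, v⟫ := by fun_prop
  obtain ⟨δ, hδ, hδle⟩ := (hK.inter_right isClosed_sphere).exists_forall_le' hcont.continuousOn hv
  set A := {x ∈ K | ⟪x - c, v⟫ ≤ δ / 2}
  have hA : IsCompact A := hK.inter_right (isClosed_le hcont continuous_const)
  have hAball : A ⊆ ball c r := fun x hx => by
    refine lt_of_le_of_ne (mem_closedBall.1 (hsub hx.1)) fun hxr => ?_
    linarith [hδle x ⟨hx.1, hxr⟩, hx.2]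
  obtain ⟨r₁, hr₁, hAr₁⟩ := hA.exists_lt_subset_ball hAball
  have hsmall : ∀ᶠ t in 𝓝[>] (0 : ℝ), t * ‖v‖ < r - r₁ ∧ t * ‖v‖ ^ 2 < δ := by
    refine nhdsWithin_le_nhds (Eventually.and ?_ ?_)
    · exact (Continuous.tendsto (by fun_prop) 0).eventually_lt_const (by simpa using hr₁)
    · exact (Continuous.tendsto (by fun_prop) 0).eventually_lt_const (by simpa using hδ)
  obtain ⟨t, ⟨ht₁, ht₂⟩, ht₀ : 0 < t⟩ := (hsmall.and self_mem_nhdsWithin).exists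
  suffices K ⊆ ball (c + t • v) r from
    let ⟨r', hr', hKr'⟩ := hK.exists_lt_subset_ball this
    ⟨_, r', hr', hKr'.trans ball_subset_closedBall⟩
  intro x hx
  by_cases hxA : x ∈ A
  · calc dist x (c + t • v) ≤ dist x c + dist c (c + t • v) := dist_triangle _ _ _
      _ < r₁ + t * ‖v‖ := by
        rw [dist_self_add_right, norm_smul, Real.norm_of_nonneg ht₀.le]
        linarith [mem_ball.1 (hAr₁ hxA)]
      _ < r := by linarith
  · have hx' : δ / 2 < ⟪x - c, v⟫ := lt_of_not_ge fun h => hxA ⟨hx, h⟩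
    have hxc : ‖x - c‖ ≤ r := mem_closedBall_iff_norm.1 (hsub hx)
    rw [mem_ball_iff_norm]
    refine lt_of_pow_lt_pow_left₀ 2 (norm_nonneg _ |>.trans hxc) ?_
    rw [norm_sub_add_smul_sq]
    nlinarith [pow_le_pow_left₀ (norm_nonneg _) hxc 2]

theorem stmt8_general (K : Set ℂ) (hK : IsCompact K)
    (c : ℂ) (r : ℝ) (hsub : K ⊆ Metric.closedBall c r)
    (hmin : ∀ (c' : ℂ) (r' : ℝ), K ⊆ Metric.closedBall c' r' → r ≤ r')
    (a b : ℂ) (hbd : K ∩ Metric.sphere c r = {a, b}) :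
    a + b = 2 * c := by
  by_contra hne
  have hv : (a - c) + (b - c) ≠ 0 := fun h => hne (by linear_combination h)
  have hmem : ∀ x ∈ ({a, b} : Set ℂ), ‖x - c‖ = r := by
    rw [← hbd]
    exact fun x hx => mem_sphere_iff_norm.1 hx.2
  have hnorm : ‖a - c‖ = ‖b - c‖ := by rw [hmem a (by simp), hmem b (by simp)]
  have hout : ∀ x ∈ K ∩ sphere c r, 0 < ⟪x - c, (a - c) + (b - c)⟫ := by
    rw [hbd]
    rintro x (rfl | rfl)
    · rw [real_inner_add_eq_half_norm_add_sq hnorm]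
      positivity
    · rw [add_comm, real_inner_add_eq_half_norm_add_sq hnorm.symm, add_comm]
      positivity
  obtain ⟨c', r', hr', hKc'⟩ := hK.exists_lt_subset_closedBall_of_inner_pos hsub _ hout
  exact (hmin c' r' hKc').not_gt hr'

/-- if the minimal enclosing disk `closedBall c r` of a compact set `K ⊆ ℂ` with
at least two points meets `K` on its boundary circle in exactly two points `a, b`, then `a`
and `b` are antipodal: `a + b = 2c`. -/
theorem stmt8 (K : Set ℂ) (hK : IsCompact K) (hK2 : ∃ a ∈ K, ∃ b ∈ K, a ≠ b)
    (c : ℂ) (r : ℝ) (hsub : K ⊆ Metric.closedBall c r)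
    (hmin : ∀ (c' : ℂ) (r' : ℝ), K ⊆ Metric.closedBall c' r' → r ≤ r')
    (a b : ℂ) (hab : a ≠ b) (hbd : K ∩ Metric.sphere c r = {a, b}) :
    a + b = 2 * c :=
  stmt8_general K hK c r hsub hmin a b hbd
end

section
/- Let K ⊆ ℂ be compact containing at least two points. Then there exists a subset T ⊆ K with at most three points whose minimal enclosing disk equals the minimal enclosing disk of K; in particular the minimal enclosing radius of T equals that of K. -/
open Metric Set Module

/-! If every `d + 1` points of `K ⊆ E`, `d = dim E`, lie in a closed ball of radius `ρ`, then by
Helly's theorem the balls of radius `ρ` centred at the points of `K` have a common point, the centre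
of a ball of radius `ρ` containing `K`. Hence for `ρ < r` the `(d + 1)`-tuples of points of `K` that
no open ball of radius `ρ` contains form a nonempty compact set, decreasing in `ρ`; a tuple in the
intersection of these sets fits in no ball of radius less than `r`. -/

section Tuples

variable {E : Type*}

def unenclosedTuples [PseudoMetricSpace E] (K : Set E) (m : ℕ) (ρ : ℝ) : Set (Fin m → E) :=
  {t | (∀ i, t i ∈ K) ∧ ∀ z, ∃ i, ρ ≤ dist (t i) z}

theorem unenclosedTuples_antitone [PseudoMetricSpace E] (K : Set E) (m : ℕ) :
    Antitone (unenclosedTuples K m) :=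
  fun _ _ hρ _ ⟨htK, ht⟩ => ⟨htK, fun z => (ht z).imp fun _ hi => hρ.trans hi⟩

theorem isCompact_unenclosedTuples [PseudoMetricSpace E] {K : Set E} (hK : IsCompact K)
    (m : ℕ) (ρ : ℝ) : IsCompact (unenclosedTuples K m ρ) := by
  have hclosed : IsClosed {t : Fin m → E | ∀ z, ∃ i, ρ ≤ dist (t i) z} := by
    simp only [ofPred_forall, ofPred_exists]
    exact isClosed_iInter fun z => isClosed_iUnion_of_finite fun i =>
      isClosed_le continuous_const ((continuous_apply i).dist continuous_const)
  convert (isCompact_univ_pi fun _ => hK).inter_right hclosed using 1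
  ext t
  simp [unenclosedTuples]

theorem exists_closedBall_superset_of_forall_tuple [NormedAddCommGroup E] [NormedSpace ℝ E]
    [FiniteDimensional ℝ E] {K : Set E} {ρ : ℝ}
    (h : ∀ t : Fin (finrank ℝ E + 1) → E, (∀ i, t i ∈ K) → ∃ z, ∀ i, dist (t i) z ≤ ρ) :
    ∃ z, K ⊆ closedBall z ρ := by
  obtain ⟨z, hz⟩ := Convex.helly_theorem_compact' (𝕜 := ℝ) (F := fun x : K => closedBall (x : E) ρ)
    (fun _ => convex_closedBall _ _) (fun _ => isCompact_closedBall _ _) fun I hI => by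
      rcases I.eq_empty_or_nonempty with rfl | ⟨x₀, hx₀⟩
      · simp
      have : Nonempty I := ⟨⟨x₀, hx₀⟩⟩
      -- a surjective left inverse of `I ↪ Fin (d + 1)` lists the points of `I` as a `(d + 1)`-tuple
      let f : Fin (finrank ℝ E + 1) → I :=
        Function.invFun (I.equivFin.toEmbedding.trans (Fin.castLEEmb hI))
      have hf : Function.Surjective f := Function.invFun_surjective (Function.Embedding.injective _)
      obtain ⟨z, hz⟩ := h (fun i => f i) fun i => (f i : K).2
      refine ⟨z, mem_iInter₂.2 fun x hx => ?_⟩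
      obtain ⟨i, hi⟩ := hf ⟨x, hx⟩
      simpa [hi, dist_comm] using hz i
  exact ⟨z, fun x hx => by simpa [dist_comm] using mem_iInter.1 hz ⟨x, hx⟩⟩

variable [NormedAddCommGroup E] [NormedSpace ℝ E] [FiniteDimensional ℝ E]

theorem unenclosedTuples_nonempty {K : Set E} {r ρ : ℝ}
    (hmin : ∀ c ρ', K ⊆ closedBall c ρ' → r ≤ ρ') (hρ : ρ < r) :
    (unenclosedTuples K (finrank ℝ E + 1) ρ).Nonempty := by
  by_contra hempty
  obtain ⟨z, hz⟩ := exists_closedBall_superset_of_forall_tuple (K := K) (ρ := ρ) fun t htK => by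
    have ht : t ∉ unenclosedTuples K _ ρ := fun ht => hempty ⟨t, ht⟩
    simp only [unenclosedTuples, mem_ofPred_eq, not_and, not_forall, not_exists, not_le] at ht
    obtain ⟨z, hz⟩ := ht htK
    exact ⟨z, fun i => (hz i).le⟩
  exact hρ.not_ge (hmin z ρ hz)

theorem IsCompact.exists_tuple_forall_closedBall_superset_radius_ge {K : Set E}
    (hK : IsCompact K) {r : ℝ} (hmin : ∀ c ρ, K ⊆ closedBall c ρ → r ≤ ρ) :
    ∃ t : Fin (finrank ℝ E + 1) → E, range t ⊆ K ∧ ∀ c ρ, range t ⊆ closedBall c ρ → r ≤ ρ := by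
  obtain ⟨t, ht⟩ := IsCompact.nonempty_iInter_of_directed_nonempty_isCompact_isClosed
    (fun ρ : Iio r => unenclosedTuples K (finrank ℝ E + 1) ρ)
    ((unenclosedTuples_antitone K _).comp_monotone (Subtype.mono_coe _)).directed_ge
    (fun ρ => unenclosedTuples_nonempty hmin ρ.2) (fun _ => isCompact_unenclosedTuples hK _ _)
    (fun _ => (isCompact_unenclosedTuples hK _ _).isClosed)
  have htρ := mem_iInter.1 ht
  refine ⟨t, range_subset_iff.2 (htρ ⟨r - 1, by simp⟩).1, fun c ρ hball => ?_⟩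
  refine le_of_forall_lt_imp_le_of_dense fun ρ' hρ' => ?_
  obtain ⟨i, hi⟩ := (htρ ⟨ρ', hρ'⟩).2 c
  exact hi.trans (hball (mem_range_self i))

end Tuples

theorem stmt10_general (K : Set ℂ) (hK : IsCompact K)
    (c : ℂ) (r : ℝ) (hsub : K ⊆ Metric.closedBall c r)
    (hmin : ∀ (c' : ℂ) (r' : ℝ), K ⊆ Metric.closedBall c' r' → r ≤ r') :
    ∃ T ⊆ K, T.ncard ≤ 3 ∧ T ⊆ Metric.closedBall c r ∧
      ∀ (c' : ℂ) (r' : ℝ), T ⊆ Metric.closedBall c' r' → r ≤ r' := by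
  obtain ⟨t, htK, ht⟩ := hK.exists_tuple_forall_closedBall_superset_radius_ge hmin
  refine ⟨range t, htK, ?_, htK.trans hsub, ht⟩
  rw [← image_univ]
  exact (ncard_image_le (toFinite _)).trans (by simp [Complex.finrank_real_complex])

/-- if `closedBall c r` is the minimal enclosing disk of a compact set `K ⊆ ℂ`
with at least two points, then there is a subset `T ⊆ K` with at most three points having the
same minimal enclosing disk (in particular the same minimal enclosing radius `r`). -/
theorem stmt10 (K : Set ℂ) (hK : IsCompact K) (hK2 : ∃ a ∈ K, ∃ b ∈ K, a ≠ b)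
    (c : ℂ) (r : ℝ) (hsub : K ⊆ Metric.closedBall c r)
    (hmin : ∀ (c' : ℂ) (r' : ℝ), K ⊆ Metric.closedBall c' r' → r ≤ r') :
    ∃ T ⊆ K, T.ncard ≤ 3 ∧ T ⊆ Metric.closedBall c r ∧
      ∀ (c' : ℂ) (r' : ℝ), T ⊆ Metric.closedBall c' r' → r ≤ r' :=
  stmt10_general K hK c r hsub hmin
end

section
/- Any compact subset of ℂ of diameter d is contained in a closed disk of radius d/√3 (Jung's theorem in the plane). -/
/-!
By Helly's theorem in the plane it suffices to show that any three points of `K` lie in a closed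
disk of radius `d / √3`. Let `ab` be the longest side of the triangle `abc`; the similarity
`z ↦ a + (b - a) z` reduces to `a = 0`, `b = 1`, and after conjugating, `Im c ≥ 0`. Then `c` lies
in the upper half of the lens `|z| ≤ 1, |z - 1| ≤ 1`, which is contained in the circumdisk of the
equilateral triangle `0, 1, e^{iπ/3}`: centre `1/2 + i √3/6`, radius `1/√3`.
-/

open Metric ComplexConjugate

lemma sq_add_sq_le_of_mem_upper_lens {x y : ℝ} (hy : 0 ≤ y) (h0 : x ^ 2 + y ^ 2 ≤ 1)
    (h1 : (x - 1) ^ 2 + y ^ 2 ≤ 1) : (x - 1 / 2) ^ 2 + (y - √3 / 6) ^ 2 ≤ 1 / 3 := by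
  have hs : √3 ^ 2 = 3 := Real.sq_sqrt (by norm_num)
  have hsy : 0 ≤ √3 * y := mul_nonneg (Real.sqrt_nonneg 3) hy
  have hu : (x - 1 / 2) ^ 2 + |x - 1 / 2| + y ^ 2 ≤ 3 / 4 := by
    rcases abs_cases (x - 1 / 2) with ⟨hu, -⟩ | ⟨hu, -⟩ <;> rw [hu] <;> nlinarith
  -- Either `(x, y)` lies above the sides of the equilateral triangle, where `hu` suffices, or
  -- inside it, where the convex quadratic is bounded by its values at the vertices.
  rcases le_total (1 / 2) (|x - 1 / 2| + √3 / 3 * y) with hl | hl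
  · nlinarith
  · have hys : y ≤ √3 / 2 := by
      nlinarith [abs_nonneg (x - 1 / 2), Real.sqrt_pos.2 (by norm_num : (0 : ℝ) < 3)]
    nlinarith [mul_nonneg (abs_nonneg (x - 1 / 2)) (by linarith : 0 ≤ 1 / 2 - |x - 1 / 2|),
      mul_nonneg hy (sub_nonneg.2 hys), sq_abs (x - 1 / 2)]

lemma Complex.norm_le_iff_sq_add_sq_le {z : ℂ} {r : ℝ} (hr : 0 ≤ r) :
    ‖z‖ ≤ r ↔ z.re ^ 2 + z.im ^ 2 ≤ r ^ 2 := by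
  rw [← sq_le_sq₀ (norm_nonneg _) hr, Complex.sq_norm, Complex.normSq_apply, ← sq, ← sq]

lemma Complex.inter_closedBall_zero_one_nonempty {w : ℂ}
    (hw : w ∈ closedBall 0 1 ∩ closedBall 1 1) :
    (closedBall 0 (1 / √3) ∩ closedBall 1 (1 / √3) ∩ closedBall w (1 / √3)).Nonempty := by
  wlog him : 0 ≤ w.im generalizing w
  · obtain ⟨p, hp⟩ := this (w := conj w) (by simpa [← Complex.dist_conj_conj w] using hw)
      (by rw [Complex.conj_im]; linarith)
    exact ⟨conj p, by simpa [← Complex.dist_conj_conj p] using hp⟩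
  refine ⟨⟨1 / 2, √3 / 6⟩, ?_⟩
  have hs : √3 ^ 2 = 3 := Real.sq_sqrt (by norm_num)
  have hr : (1 / √3) ^ 2 = 1 / 3 := by rw [div_pow, hs, one_pow]
  simp only [Set.mem_inter_iff, mem_closedBall, dist_eq_norm, Complex.norm_le_iff_sq_add_sq_le,
    zero_le_one, one_div_nonneg, Real.sqrt_nonneg, hr] at hw ⊢
  norm_num at hw ⊢
  have := sq_add_sq_le_of_mem_upper_lens him hw.1 hw.2
  exact ⟨by nlinarith, by nlinarith⟩

lemma Complex.affine_mem_closedBall {a b p z : ℂ} {r : ℝ} (h : p ∈ closedBall z r) :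
    a + (b - a) * p ∈ closedBall (a + (b - a) * z) (dist a b * r) := by
  rw [mem_closedBall, dist_add_left, dist_eq_norm, ← mul_sub, norm_mul, norm_sub_rev,
    ← dist_eq_norm, ← dist_eq_norm]
  exact mul_le_mul_of_nonneg_left (mem_closedBall.1 h) dist_nonneg

lemma Complex.inter_closedBall_nonempty_of_dist_le_dist {a b c : ℂ} (hac : dist a c ≤ dist a b)
    (hbc : dist b c ≤ dist a b) :
    (closedBall a (dist a b / √3) ∩ closedBall b (dist a b / √3) ∩
      closedBall c (dist a b / √3)).Nonempty := by
  rcases eq_or_ne a b with rfl | hab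
  · obtain rfl : a = c := dist_le_zero.1 (by simpa using hac)
    exact ⟨a, by simp⟩
  have hba : b - a ≠ 0 := sub_ne_zero.2 hab.symm
  set w := (c - a) / (b - a)
  have hw : w ∈ closedBall 0 1 ∩ closedBall 1 1 := by
    have hw1 : w - 1 = (c - b) / (b - a) := by rw [div_sub_one hba, sub_sub_sub_cancel_right]
    rw [Set.mem_inter_iff, mem_closedBall, mem_closedBall, dist_zero_right, dist_eq_norm, hw1,
      norm_div, norm_div, div_le_one (norm_pos_iff.2 hba), div_le_one (norm_pos_iff.2 hba),
      ← dist_eq_norm, ← dist_eq_norm, ← dist_eq_norm, dist_comm c, dist_comm c, dist_comm b]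
    exact ⟨hac, hbc⟩
  obtain ⟨p, ⟨hp0, hp1⟩, hpw⟩ := Complex.inter_closedBall_zero_one_nonempty hw
  have hf (z : ℂ) (hz : p ∈ closedBall z (1 / √3)) :
      a + (b - a) * p ∈ closedBall (a + (b - a) * z) (dist a b / √3) := by
    simpa only [mul_one_div] using Complex.affine_mem_closedBall (a := a) (b := b) hz
  refine ⟨a + (b - a) * p, ⟨?_, ?_⟩, ?_⟩
  · simpa using hf 0 hp0
  · simpa using hf 1 hp1
  · simpa [w, mul_div_cancel₀ _ hba] using hf w hpw

lemma Complex.inter_closedBall_nonempty_of_dist_le {a b c : ℂ} {d : ℝ} (hab : dist a b ≤ d)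
    (hac : dist a c ≤ d) (hbc : dist b c ≤ d) :
    (closedBall a (d / √3) ∩ closedBall b (d / √3) ∩ closedBall c (d / √3)).Nonempty := by
  wlog hmax : dist a c ≤ dist a b ∧ dist b c ≤ dist a b generalizing a b c
  · rcases le_total (dist a c) (dist b c) with h | h
    · have := this (a := b) (b := c) (c := a) hbc (by rwa [dist_comm]) (by rwa [dist_comm])
        ⟨by rw [dist_comm]; grind, by rw [dist_comm]; grind⟩
      simpa only [Set.inter_comm, Set.inter_left_comm, Set.inter_assoc] using this
    · have := this (a := a) (b := c) (c := b) hac hab (by rwa [dist_comm])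
        ⟨by grind, by rw [dist_comm]; grind⟩
      simpa only [Set.inter_comm, Set.inter_left_comm, Set.inter_assoc] using this
  refine (Complex.inter_closedBall_nonempty_of_dist_le_dist hmax.1 hmax.2).mono ?_
  gcongr

lemma Finset.exists_forall_mem_eq_or_eq_or_eq {α : Type*} {s : Finset α} (hs : s.Nonempty)
    (h : s.card ≤ 3) : ∃ a b c, ∀ x ∈ s, x = a ∨ x = b ∨ x = c := by
  classical
  obtain h | h | h : s.card = 1 ∨ s.card = 2 ∨ s.card = 3 := by have := hs.card_pos; omega
  · obtain ⟨a, rfl⟩ := Finset.card_eq_one.1 h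
    exact ⟨a, a, a, by simp⟩
  · obtain ⟨a, b, -, rfl⟩ := Finset.card_eq_two.1 h
    exact ⟨a, a, b, by simp⟩
  · obtain ⟨a, b, c, -, -, -, rfl⟩ := Finset.card_eq_three.1 h
    exact ⟨a, b, c, by simp⟩

lemma Complex.iInter_nonempty_of_forall_inter_three {ι : Type*} {F : ι → Set ℂ}
    (hconv : ∀ i, Convex ℝ (F i)) (hcomp : ∀ i, IsCompact (F i))
    (h : ∀ i j k, (F i ∩ F j ∩ F k).Nonempty) : (⋂ i, F i).Nonempty := by
  refine Convex.helly_theorem_compact' hconv hcomp fun I hI => ?_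
  rw [Complex.finrank_real_complex] at hI
  rcases I.eq_empty_or_nonempty with rfl | hne
  · simp
  obtain ⟨i, j, k, hI⟩ := Finset.exists_forall_mem_eq_or_eq_or_eq hne hI
  refine (h i j k).mono fun x hx => Set.mem_iInter₂.2 fun l hl => ?_
  obtain rfl | rfl | rfl := hI l hl
  exacts [hx.1.1, hx.1.2, hx.2]

/-- Jung's theorem in the plane: any compact `K ⊆ ℂ` of diameter `d` is
contained in a closed disk of radius `d / √3`. -/
theorem stmt11 (K : Set ℂ) (hK : IsCompact K) :
    ∃ c : ℂ, K ⊆ Metric.closedBall c (Metric.diam K / Real.sqrt 3) := by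
  have hdiam (x y : K) : dist (x : ℂ) y ≤ diam K := dist_le_diam_of_mem hK.isBounded x.2 y.2
  obtain ⟨c, hc⟩ := Complex.iInter_nonempty_of_forall_inter_three
    (F := fun z : K => closedBall (z : ℂ) (diam K / √3)) (fun _ => convex_closedBall _ _)
    (fun _ => isCompact_closedBall _ _) fun a b c =>
      Complex.inter_closedBall_nonempty_of_dist_le (hdiam a b) (hdiam a c) (hdiam b c)
  exact ⟨c, fun z hz => mem_closedBall_comm.1 (Set.mem_iInter.1 hc ⟨z, hz⟩)⟩
end

section
/- Let a, b > 0, γ(t) = a·cos t + i·b·sin t, A = 2ab/(a²+b²), B = (b²−a²)/(b²+a²). Then for all s, t ∈ ℝ: Im(γ'(t)/(γ(t) − γ(s))) = (1/2)·A/(1 + B·cos(t+s)) whenever γ(t) ≠ γ(s). -/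
/-!
Both the numerator and the denominator of `Im(γ'(t) · conj(γ(t) - γ(s))) / |γ(t) - γ(s)|²` carry
the factor `1 - cos (t - s)`: the numerator is `ab (1 - cos (t - s))` and
`|γ(t) - γ(s)|² = (1 - cos (t - s)) ((a² + b²) + (b² - a²) cos (t + s))`.
As the chord is nonzero the factor cancels, leaving `ab / ((a² + b²) + (b² - a²) cos (t + s))`.
-/

open Real ComplexConjugate

lemma Complex.im_div_eq_im_mul_conj_div_normSq (z w : ℂ) :
    (z / w).im = (z * conj w).im / Complex.normSq w := by
  rw [Complex.div_im, Complex.mul_im, Complex.conj_re, Complex.conj_im]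
  ring

noncomputable def ellipse (a b t : ℝ) : ℂ := (a * cos t : ℝ) + (b * sin t : ℝ) * Complex.I

noncomputable def ellipseDeriv (a b t : ℝ) : ℂ :=
  (-(a * sin t) : ℝ) + (b * cos t : ℝ) * Complex.I

section Ellipse

variable (a b s t : ℝ)

@[simp] lemma ellipse_re : (ellipse a b t).re = a * cos t := by simp [ellipse, -Complex.ofReal_mul]

@[simp] lemma ellipse_im : (ellipse a b t).im = b * sin t := by simp [ellipse, -Complex.ofReal_mul]

@[simp] lemma ellipseDeriv_re : (ellipseDeriv a b t).re = -(a * sin t) := by simp [ellipseDeriv, -Complex.ofReal_mul, -Complex.ofReal_neg]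

@[simp] lemma ellipseDeriv_im : (ellipseDeriv a b t).im = b * cos t := by simp [ellipseDeriv, -Complex.ofReal_mul, -Complex.ofReal_neg]

lemma normSq_ellipse_sub :
    Complex.normSq (ellipse a b t - ellipse a b s)
      = (1 - cos (t - s)) * (a ^ 2 + b ^ 2 + (b ^ 2 - a ^ 2) * cos (t + s)) := by
  rw [Complex.normSq_apply, cos_sub, cos_add]
  simp only [Complex.sub_re, Complex.sub_im, ellipse_re, ellipse_im]
  linear_combination (b ^ 2 - (b ^ 2 - a ^ 2) * sin s ^ 2) * sin_sq_add_cos_sq t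
    + (b ^ 2 - (b ^ 2 - a ^ 2) * (1 - cos t ^ 2)) * sin_sq_add_cos_sq s

lemma im_ellipseDeriv_mul_conj_ellipse_sub :
    (ellipseDeriv a b t * conj (ellipse a b t - ellipse a b s)).im = a * b * (1 - cos (t - s)) := by
  rw [Complex.mul_im, Complex.conj_re, Complex.conj_im, cos_sub]
  simp only [Complex.sub_re, Complex.sub_im, ellipse_re, ellipse_im, ellipseDeriv_re,
    ellipseDeriv_im]
  linear_combination a * b * sin_sq_add_cos_sq t

lemma im_ellipseDeriv_div_ellipse_sub (hne : ellipse a b t ≠ ellipse a b s) :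
    (ellipseDeriv a b t / (ellipse a b t - ellipse a b s)).im
      = a * b / (a ^ 2 + b ^ 2 + (b ^ 2 - a ^ 2) * cos (t + s)) := by
  have hchord : (1 - cos (t - s)) * (a ^ 2 + b ^ 2 + (b ^ 2 - a ^ 2) * cos (t + s)) ≠ 0 := by
    rw [← normSq_ellipse_sub, Ne, Complex.normSq_eq_zero, sub_eq_zero]
    exact hne
  rw [Complex.im_div_eq_im_mul_conj_div_normSq, im_ellipseDeriv_mul_conj_ellipse_sub,
    normSq_ellipse_sub, mul_comm (a * b), mul_div_mul_left _ _ (left_ne_zero_of_mul hchord)]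

end Ellipse

theorem stmt12_general (a b : ℝ) (γ γ' : ℝ → ℂ)
    (hγ : γ = fun t => (a * Real.cos t : ℝ) + (b * Real.sin t : ℝ) * Complex.I)
    (hγ' : γ' = fun t => (-(a * Real.sin t) : ℝ) + (b * Real.cos t : ℝ) * Complex.I)
    (A B : ℝ) (hA : A = 2 * a * b / (a ^ 2 + b ^ 2)) (hB : B = (b ^ 2 - a ^ 2) / (b ^ 2 + a ^ 2))
    (s t : ℝ) (hne : γ t ≠ γ s) :
    (γ' t / (γ t - γ s)).im = (1 / 2) * A / (1 + B * Real.cos (t + s)) := by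
  obtain rfl : γ = ellipse a b := hγ
  obtain rfl : γ' = ellipseDeriv a b := hγ'
  rw [im_ellipseDeriv_div_ellipse_sub a b s t hne, hA, hB]
  have hab : a ^ 2 + b ^ 2 ≠ 0 := by
    rintro hab
    obtain ⟨rfl, rfl⟩ : a = 0 ∧ b = 0 := ⟨by nlinarith, by nlinarith⟩
    simp [ellipse] at hne
  rw [add_comm (b ^ 2)]
  field_simp

/-- for the ellipse parametrization `γ(t) = a cos t + i b sin t`, with
`A = 2ab/(a²+b²)` and `B = (b²−a²)/(b²+a²)`, one has
`Im(γ'(t)/(γ(t) − γ(s))) = (1/2)·A/(1 + B cos(t+s))` whenever `γ(t) ≠ γ(s)`. -/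
theorem stmt12 (a b : ℝ) (ha : 0 < a) (hb : 0 < b) (γ γ' : ℝ → ℂ)
    (hγ : γ = fun t => (a * Real.cos t : ℝ) + (b * Real.sin t : ℝ) * Complex.I)
    (hγ' : γ' = fun t => (-(a * Real.sin t) : ℝ) + (b * Real.cos t : ℝ) * Complex.I)
    (A B : ℝ) (hA : A = 2 * a * b / (a ^ 2 + b ^ 2)) (hB : B = (b ^ 2 - a ^ 2) / (b ^ 2 + a ^ 2))
    (s t : ℝ) (hne : γ t ≠ γ s) :
    (γ' t / (γ t - γ s)).im = (1 / 2) * A / (1 + B * Real.cos (t + s)) :=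
  stmt12_general a b γ γ' hγ hγ' A B hA hB s t hne
end

section
/- Let A, B be real numbers with A > 0, A² + B² = 1, B ≥ 0. Then (1/(2π)) ∫_{−π/2}^{π/2} (2AB·cos t)/(1 − B²·cos² t) dt = (2/π)·arctan(B/A). -/
open Real

/-! The integrand has the elementary antiderivative `2 arctan (B sin t / A)`: since `A² + B² = 1`,
the denominator `1 - B² cos² t` equals `A² + B² sin² t`, which is `A²` times `1 + (B sin t / A)²`. -/

theorem hasDerivAt_arctan_mul_sin_div {A : ℝ} (hA : A ≠ 0) (B t : ℝ) :
    HasDerivAt (fun t => arctan (B * sin t / A))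
      (A * B * cos t / (A ^ 2 + B ^ 2 * sin t ^ 2)) t := by
  have hinner : HasDerivAt (fun t => B * sin t / A) (B * cos t / A) t :=
    ((hasDerivAt_sin t).const_mul B).div_const A
  refine ((hasDerivAt_arctan _).comp t hinner).congr_deriv ?_
  have hpos : 0 < A ^ 2 + B ^ 2 * sin t ^ 2 := by positivity
  field_simp

theorem integral_mul_cos_div_sq_add_sq_mul_sin_sq {A : ℝ} (hA : A ≠ 0) (B a b : ℝ) :
    ∫ t in a..b, A * B * cos t / (A ^ 2 + B ^ 2 * sin t ^ 2) =
      arctan (B * sin b / A) - arctan (B * sin a / A) := by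
  refine intervalIntegral.integral_eq_sub_of_hasDerivAt
    (fun t _ => hasDerivAt_arctan_mul_sin_div hA B t) (Continuous.intervalIntegrable ?_ a b)
  exact Continuous.div (by fun_prop) (by fun_prop) fun t => by positivity

theorem one_sub_sq_mul_cos_sq {A B : ℝ} (hAB : A ^ 2 + B ^ 2 = 1) (t : ℝ) :
    1 - B ^ 2 * cos t ^ 2 = A ^ 2 + B ^ 2 * sin t ^ 2 := by
  linear_combination hAB.symm - B ^ 2 * cos_sq_add_sin_sq t

theorem stmt13_general (A B : ℝ) (hA : 0 < A) (hAB : A ^ 2 + B ^ 2 = 1) :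
    (1 / (2 * π)) * ∫ t in (-(π / 2))..(π / 2),
        (2 * A * B * Real.cos t) / (1 - B ^ 2 * Real.cos t ^ 2) =
      (2 / π) * Real.arctan (B / A) := by
  have hintegrand : (fun t => 2 * A * B * cos t / (1 - B ^ 2 * cos t ^ 2)) =
      fun t => 2 * (A * B * cos t / (A ^ 2 + B ^ 2 * sin t ^ 2)) := by
    funext t
    rw [one_sub_sq_mul_cos_sq hAB t]
    ring
  rw [hintegrand, intervalIntegral.integral_const_mul,
    integral_mul_cos_div_sq_add_sq_mul_sin_sq hA.ne', sin_neg, sin_pi_div_two, mul_neg, mul_one,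
    neg_div, arctan_neg]
  field_simp
  ring

/-- for real `A > 0`, `B ≥ 0` with `A² + B² = 1`,
`(1/(2π)) ∫_{−π/2}^{π/2} (2AB cos t)/(1 − B² cos² t) dt = (2/π) arctan(B/A)`. -/
theorem stmt13 (A B : ℝ) (hA : 0 < A) (hB : 0 ≤ B) (hAB : A ^ 2 + B ^ 2 = 1) :
    (1 / (2 * π)) * ∫ t in (-(π / 2))..(π / 2),
        (2 * A * B * Real.cos t) / (1 - B ^ 2 * Real.cos t ^ 2) =
      (2 / π) * Real.arctan (B / A) :=
  stmt13_general A B hA hAB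
end

section
/- Let A > 0, B ≥ 0 with A² + B² = 1. For s ∈ [0, 2π], define F(s) = (1/(4π)) ∫_{−π}^{π} |A/(1 + B·cos(t+s)) − A/(1 + B·cos t)| dt. Then F(s) ≤ F(π) for all s ∈ [0, 2π], i.e., the supremum of F over [0,2π] is attained at s = π. -/
/-!
Write `c t = A / (1 + B cos t)`: a continuous function that is a nonincreasing function of
`cos t`, hence even and `2π`-periodic. Recentring the period at `-s/2` and using evenness,
for `0 ≤ s ≤ π` the integral of `|c (t + s) - c t|` over a period equals
`2 (I (s/2) - I (-s/2))` with `I a = ∫_a^{a+π} c`, because `c (u + s/2) - c (u - s/2)` has the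
sign of `sin u`. Since `c (u + π) ≥ c u` whenever `cos u ≥ 0`, `I` increases on `[-π/2, π/2]`,
so this is largest at `s = π`. The substitution `t ↦ -t` turns `s` into `2π - s`.
-/

open Real Set intervalIntegral

theorem intervalIntegral_neg_self_of_even {f : ℝ → ℝ} {a : ℝ} (hf : ∀ x, f (-x) = f x)
    (hint : IntervalIntegrable f MeasureTheory.volume (-a) a) :
    ∫ x in -a..a, f x = 2 * ∫ x in 0..a, f x := by
  have h0 : (0 : ℝ) ∈ uIcc (-a) a := by
    rcases le_total 0 a with ha | ha
    · exact mem_uIcc_of_le (by linarith) ha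
    · exact mem_uIcc_of_ge ha (by linarith)
  have hleft : ∫ x in -a..0, f x = ∫ x in 0..a, f x := by
    simpa [hf] using (integral_comp_neg (a := 0) (b := a) f).symm
  rw [← integral_add_adjacent_intervals (hint.mono_set (uIcc_subset_uIcc_left h0))
    (hint.mono_set (uIcc_subset_uIcc_right h0)), hleft, two_mul]

section CosMonotone

variable {c : ℝ → ℝ} (hc : ∀ x y, cos y ≤ cos x → c x ≤ c y)
include hc

theorem apply_eq_of_cos_eq {x y : ℝ} (h : cos x = cos y) : c x = c y :=
  le_antisymm (hc x y h.ge) (hc y x h.le)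

theorem integral_abs_sub_comp_add_eq (hcont : Continuous c) {s : ℝ} (hs : 0 ≤ sin (s / 2)) :
    ∫ t in -π..π, |c (t + s) - c t| =
      2 * ((∫ t in s / 2..s / 2 + π, c t) - ∫ t in -(s / 2)..-(s / 2) + π, c t) := by
  set h : ℝ → ℝ := fun u => c (u + s / 2) - c (u - s / 2)
  have hh : Continuous h := by simp only [h]; fun_prop
  have hperiodic : Function.Periodic (fun t => |c (t + s) - c t|) (2 * π) := fun t => by
    simp only [apply_eq_of_cos_eq hc (cos_add_two_pi _), add_right_comm t (2 * π) s]
  have hrecentre : ∫ t in -π..π, |c (t + s) - c t| = ∫ u in -π..π, |h u| := by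
    calc ∫ t in -π..π, |c (t + s) - c t|
        = ∫ t in -π - s / 2..π - s / 2, |c (t + s) - c t| := by
          have := hperiodic.intervalIntegral_add_eq (-π) (-π - s / 2)
          rwa [show -π + 2 * π = π by ring, show -π - s / 2 + 2 * π = π - s / 2 by ring] at this
      _ = ∫ u in -π..π, |h u| := by
          rw [← integral_comp_sub_right (fun t => |c (t + s) - c t|)]
          refine integral_congr fun u _ => ?_
          simp only [h]
          ring_nf
  have heven : ∀ u, |h (-u)| = |h u| := fun u => by
    simp only [h]
    rw [apply_eq_of_cos_eq hc (x := -u + s / 2) (y := u - s / 2) (by rw [← cos_neg]; ring_nf),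
      apply_eq_of_cos_eq hc (x := -u - s / 2) (y := u + s / 2) (by rw [← cos_neg]; ring_nf),
      abs_sub_comm]
  have hnonneg : ∀ u ∈ uIcc 0 π, 0 ≤ h u := fun u hu => by
    rw [uIcc_of_le pi_pos.le] at hu
    have hsin : 0 ≤ sin u := sin_nonneg_of_nonneg_of_le_pi hu.1 hu.2
    refine sub_nonneg.2 (hc _ _ ?_)
    rw [cos_add, cos_sub]
    nlinarith [mul_nonneg hsin hs]
  rw [hrecentre, intervalIntegral_neg_self_of_even heven (hh.abs.intervalIntegrable _ _),
    integral_congr fun u hu => abs_of_nonneg (hnonneg u hu)]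
  simp only [h]
  rw [integral_sub (Continuous.intervalIntegrable (by fun_prop) _ _)
      (Continuous.intervalIntegrable (by fun_prop) _ _),
    integral_comp_add_right, integral_comp_sub_right]
  ring_nf

theorem integral_add_pi_monotoneOn (hcont : Continuous c) :
    MonotoneOn (fun a => ∫ t in a..a + π, c t) (Icc (-(π / 2)) (π / 2)) := by
  intro a ha b hb hab
  refine sub_nonneg.1 ?_
  rw [integral_interval_sub_interval_comm' (hcont.intervalIntegrable _ _)
    (hcont.intervalIntegrable _ _) (hcont.intervalIntegrable _ _),
    ← integral_comp_add_right, ← integral_sub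
      (Continuous.intervalIntegrable (by fun_prop) _ _) (hcont.intervalIntegrable _ _)]
  refine integral_nonneg hab fun u hu => sub_nonneg.2 (hc _ _ ?_)
  have : 0 ≤ cos u := cos_nonneg_of_mem_Icc ⟨by linarith [ha.1, hu.1], by linarith [hb.2, hu.2]⟩
  rw [cos_add_pi]
  linarith

theorem integral_abs_sub_comp_add_le_of_le_pi (hcont : Continuous c) {s : ℝ} (hs₀ : 0 ≤ s)
    (hsπ : s ≤ π) :
    ∫ t in -π..π, |c (t + s) - c t| ≤ ∫ t in -π..π, |c (t + π) - c t| := by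
  have hπ := pi_pos
  have hright := integral_add_pi_monotoneOn hc hcont (a := s / 2) (b := π / 2)
    ⟨by linarith, by linarith⟩ ⟨by linarith, le_rfl⟩ (by linarith)
  have hleft := integral_add_pi_monotoneOn hc hcont (a := -(π / 2)) (b := -(s / 2))
    ⟨le_rfl, by linarith⟩ ⟨by linarith, by linarith⟩ (by linarith)
  rw [integral_abs_sub_comp_add_eq hc hcont (sin_nonneg_of_nonneg_of_le_pi (by linarith)
      (by linarith)), integral_abs_sub_comp_add_eq hc hcont (by simp)]
  simp only at hright hleft
  linarith

theorem integral_abs_sub_comp_add_two_pi_sub (s : ℝ) :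
    ∫ t in -π..π, |c (t + (2 * π - s)) - c t| = ∫ t in -π..π, |c (t + s) - c t| := by
  have hreflect : ∀ t, |c (t + (2 * π - s)) - c t| = |c (-t + s) - c (-t)| := fun t => by
    rw [apply_eq_of_cos_eq hc (x := -t + s) (y := t + (2 * π - s))
        (by rw [← cos_neg, ← cos_add_two_pi]; ring_nf),
      apply_eq_of_cos_eq hc (cos_neg t)]
  simp only [hreflect]
  simpa using integral_comp_neg (a := -π) (b := π) fun t => |c (t + s) - c t|

end CosMonotone

theorem div_one_add_mul_cos_le_of_cos_le {A B : ℝ} (hA : 0 ≤ A) (hB₀ : 0 ≤ B) (hB₁ : B < 1)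
    {x y : ℝ} (h : cos y ≤ cos x) : A / (1 + B * cos x) ≤ A / (1 + B * cos y) := by
  have := neg_one_le_cos y
  exact div_le_div_of_nonneg_left hA (by nlinarith) (by nlinarith)

theorem continuous_div_one_add_mul_cos {A B : ℝ} (hB₀ : 0 ≤ B) (hB₁ : B < 1) :
    Continuous fun t => A / (1 + B * cos t) :=
  continuous_const.div (by fun_prop) fun t => by nlinarith [neg_one_le_cos t]

theorem stmt14_general (A B : ℝ) (hA : 0 < A) (hB0 : 0 ≤ B) (hB1 : B < 1)
    (F : ℝ → ℝ)
    (hF : F = fun s => (1 / (4 * π)) * ∫ t in (-π)..π,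
        |A / (1 + B * Real.cos (t + s)) - A / (1 + B * Real.cos t)|) :
    ∀ s ∈ Set.Icc (0 : ℝ) (2 * π), F s ≤ F π := by
  rintro s ⟨hs₀, hs₂π⟩
  have hc : ∀ x y, cos y ≤ cos x → A / (1 + B * cos x) ≤ A / (1 + B * cos y) :=
    fun _ _ => div_one_add_mul_cos_le_of_cos_le hA.le hB0 hB1
  have hcont := continuous_div_one_add_mul_cos (A := A) hB0 hB1
  subst hF
  refine mul_le_mul_of_nonneg_left ?_ (by positivity)
  rcases le_total s π with hsπ | hπs
  · exact integral_abs_sub_comp_add_le_of_le_pi hc hcont hs₀ hsπ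
  · rw [← integral_abs_sub_comp_add_two_pi_sub hc s]
    exact integral_abs_sub_comp_add_le_of_le_pi hc hcont (by linarith) (by linarith)

/-- for `A > 0`, `0 ≤ B < 1` with `A² + B² = 1`, the function
`F(s) = (1/(4π)) ∫_{−π}^{π} |A/(1 + B cos(t+s)) − A/(1 + B cos t)| dt` on `[0, 2π]`
attains its maximum at `s = π`. -/
theorem stmt14 (A B : ℝ) (hA : 0 < A) (hB0 : 0 ≤ B) (hB1 : B < 1) (hAB : A ^ 2 + B ^ 2 = 1)
    (F : ℝ → ℝ)
    (hF : F = fun s => (1 / (4 * π)) * ∫ t in (-π)..π,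
        |A / (1 + B * Real.cos (t + s)) - A / (1 + B * Real.cos t)|) :
    ∀ s ∈ Set.Icc (0 : ℝ) (2 * π), F s ≤ F π :=
  stmt14_general A B hA hB0 hB1 F hF
end

section
/- Let H be a complex Hilbert space, T a bounded linear operator on H, f a function holomorphic on an open neighborhood U of the spectrum of T with sup_U |f| ≤ 1, and x ∈ H a unit vector such that ‖f(T)x‖ = sup{‖g(T)‖ : g holomorphic on U, sup_U |g| ≤ 1}. If ‖f(T)‖ > 1, then ⟨f(T)x, x⟩ = 0. -/
/-!
Let `M` be the supremum of `‖g(T)‖` over the unit ball. For `‖a‖ < 1` the Möbius transform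
`g = (f + a) / (1 + ā f)` again maps `U` into the closed unit disc and `f + a = g · (1 + ā f)`
on `U`. The functional calculus only sees values on `U`: a function vanishing on `U` stays in the
unit ball after any rescaling, so its image is zero. Hence `f(T) + a = g(T) (1 + ā f(T))` and
`‖f(T)x + a x‖ ≤ M ‖x + ā f(T)x‖`. Squaring both sides, with `‖f(T)x‖ = M > 1` and `‖x‖ = 1`, and
choosing `a = -conj ⟪f(T)x, x⟫ / (M² + 1)` leaves `(M² - 1) ‖⟪f(T)x, x⟫‖² ≤ 0`.
-/

open ComplexConjugate Set

namespace Complex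

theorem normSq_one_add_conj_mul_sub_normSq_add (z w : ℂ) :
    normSq (1 + conj w * z) - normSq (z + w) = (1 - normSq z) * (1 - normSq w) := by
  simp only [normSq_apply, add_re, add_im, mul_re, mul_im, conj_re, conj_im, one_re, one_im]
  ring

theorem norm_add_le_norm_one_add_conj_mul {z w : ℂ} (hz : ‖z‖ ≤ 1) (hw : ‖w‖ ≤ 1) :
    ‖z + w‖ ≤ ‖1 + conj w * z‖ := by
  have hz' : normSq z ≤ 1 := by rw [← Complex.sq_norm]; exact pow_le_one₀ (norm_nonneg z) hz
  have hw' : normSq w ≤ 1 := by rw [← Complex.sq_norm]; exact pow_le_one₀ (norm_nonneg w) hw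
  rw [norm_def, norm_def]
  gcongr
  nlinarith [normSq_one_add_conj_mul_sub_normSq_add z w]

theorem one_add_conj_mul_ne_zero {z w : ℂ} (hz : ‖z‖ ≤ 1) (hw : ‖w‖ < 1) : 1 + conj w * z ≠ 0 := by
  intro h
  have : ‖conj w * z‖ < 1 := by
    rw [norm_mul, norm_conj]
    exact mul_lt_one_of_nonneg_of_lt_one_left (norm_nonneg w) hw hz
  rw [eq_neg_of_add_eq_zero_right h, norm_neg, norm_one] at this
  exact this.false

end Complex

section FunctionalCalculus

variable {U : Set ℂ} {M : ℝ}

theorem map_eq_zero_of_eqOn_zero {E : Type*} [NormedAddCommGroup E] [NormedSpace ℂ E]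
    {Φ : (ℂ → ℂ) → E} (hsmul : ∀ (c : ℂ) (g : ℂ → ℂ), DifferentiableOn ℂ g U → Φ (c • g) = c • Φ g)
    (hM : ∀ g : ℂ → ℂ, DifferentiableOn ℂ g U → (∀ z ∈ U, ‖g z‖ ≤ 1) → ‖Φ g‖ ≤ M)
    {g : ℂ → ℂ} (hg : DifferentiableOn ℂ g U) (hg0 : EqOn g 0 U) : Φ g = 0 := by
  by_contra hne
  have hpos : 0 < ‖Φ g‖ := norm_pos_iff.2 hne
  set c : ℝ := (|M| + 1) / ‖Φ g‖
  have hcg : ‖Φ ((c : ℂ) • g)‖ ≤ M :=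
    hM _ (hg.const_smul _) fun z hz => by simp [hg0 hz]
  rw [hsmul _ _ hg, norm_smul, Complex.norm_real, Real.norm_of_nonneg (by positivity),
    div_mul_cancel₀ _ hpos.ne'] at hcg
  linarith [le_abs_self M]

theorem map_congr_of_eqOn {E : Type*} [NormedAddCommGroup E] [NormedSpace ℂ E]
    {Φ : (ℂ → ℂ) → E}
    (hadd : ∀ g h : ℂ → ℂ, DifferentiableOn ℂ g U → DifferentiableOn ℂ h U →
      Φ (g + h) = Φ g + Φ h)
    (hsmul : ∀ (c : ℂ) (g : ℂ → ℂ), DifferentiableOn ℂ g U → Φ (c • g) = c • Φ g)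
    (hM : ∀ g : ℂ → ℂ, DifferentiableOn ℂ g U → (∀ z ∈ U, ‖g z‖ ≤ 1) → ‖Φ g‖ ≤ M)
    {g h : ℂ → ℂ} (hg : DifferentiableOn ℂ g U) (hh : DifferentiableOn ℂ h U) (hgh : EqOn g h U) :
    Φ g = Φ h := by
  have hsub : Φ (g - h) = 0 :=
    map_eq_zero_of_eqOn_zero hsmul hM (hg.sub hh) fun z hz => sub_eq_zero.2 (hgh hz)
  rw [← sub_add_cancel g h, hadd _ _ (hg.sub hh) hh, hsub, zero_add]

theorem exists_map_add_smul_one_eq_mul {A : Type*} [NormedRing A] [NormedAlgebra ℂ A]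
    {Φ : (ℂ → ℂ) → A}
    (hadd : ∀ g h : ℂ → ℂ, DifferentiableOn ℂ g U → DifferentiableOn ℂ h U →
      Φ (g + h) = Φ g + Φ h)
    (hmul : ∀ g h : ℂ → ℂ, DifferentiableOn ℂ g U → DifferentiableOn ℂ h U →
      Φ (g * h) = Φ g * Φ h)
    (hsmul : ∀ (c : ℂ) (g : ℂ → ℂ), DifferentiableOn ℂ g U → Φ (c • g) = c • Φ g)
    (hone : Φ 1 = 1)
    (hM : ∀ g : ℂ → ℂ, DifferentiableOn ℂ g U → (∀ z ∈ U, ‖g z‖ ≤ 1) → ‖Φ g‖ ≤ M)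
    {f : ℂ → ℂ} (hf : DifferentiableOn ℂ f U) (hf1 : ∀ z ∈ U, ‖f z‖ ≤ 1) {a : ℂ} (ha : ‖a‖ < 1) :
    ∃ g : ℂ → ℂ, ‖Φ g‖ ≤ M ∧ Φ f + a • 1 = Φ g * (1 + conj a • Φ f) := by
  have hdiff_one : DifferentiableOn ℂ (1 : ℂ → ℂ) U := differentiableOn_const 1
  set den : ℂ → ℂ := 1 + conj a • f
  have hden : ∀ z ∈ U, den z ≠ 0 := fun z hz =>
    Complex.one_add_conj_mul_ne_zero (hf1 z hz) ha
  have hdend : DifferentiableOn ℂ den U := hdiff_one.add (hf.const_smul _)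
  set g : ℂ → ℂ := (f + a • 1) / den
  have hnum : DifferentiableOn ℂ (f + a • 1) U := hf.add (hdiff_one.const_smul a)
  have hg : DifferentiableOn ℂ g U := hnum.div hdend hden
  refine ⟨g, hM g hg fun z hz => ?_, ?_⟩
  · simp only [g, den, Pi.div_apply, Pi.add_apply, Pi.smul_apply, Pi.one_apply, smul_eq_mul,
      mul_one, norm_div]
    exact div_le_one_of_le₀ (Complex.norm_add_le_norm_one_add_conj_mul (hf1 z hz) ha.le)
      (norm_nonneg _)
  · have hfactor : EqOn (f + a • 1) (g * den) U := fun z hz => by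
      simp only [g, Pi.mul_apply, Pi.div_apply, div_mul_cancel₀ _ (hden z hz)]
    calc Φ f + a • 1 = Φ (f + a • 1) := by
          rw [hadd f _ hf (hdiff_one.const_smul a), hsmul a 1 hdiff_one, hone]
      _ = Φ (g * den) := map_congr_of_eqOn hadd hsmul hM hnum (hg.mul hdend) hfactor
      _ = Φ g * (1 + conj a • Φ f) := by
        rw [hmul g den hg hdend, hadd 1 _ hdiff_one (hf.const_smul _), hsmul _ f hf, hone]

end FunctionalCalculus

theorem inner_eq_zero_of_forall_norm_add_smul_le {𝕜 E : Type*} [RCLike 𝕜] [NormedAddCommGroup E]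
    [InnerProductSpace 𝕜 E] {u x : E} {M : ℝ} (hx : ‖x‖ = 1) (hu : ‖u‖ = M) (hM : 1 < M)
    (h : ∀ a : 𝕜, ‖a‖ < 1 → ‖u + a • x‖ ≤ M * ‖x + conj a • u‖) : inner 𝕜 u x = 0 := by
  set d := inner 𝕜 u x
  set w : ℝ := M ^ 2 + 1
  have hw : 0 < w := by positivity
  have hd : ‖d‖ ≤ M := by simpa [hx, hu] using norm_inner_le_norm (𝕜 := 𝕜) u x
  set a : 𝕜 := -conj d / (w : 𝕜)
  have ha : ‖a‖ = ‖d‖ / w := by simp [a, norm_div, abs_of_pos hw]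
  have had : RCLike.re (a * d) = -‖d‖ ^ 2 / w := by
    rw [div_mul_eq_mul_div, neg_mul, RCLike.conj_mul, ← RCLike.ofReal_pow, ← RCLike.ofReal_neg,
      ← RCLike.ofReal_div, RCLike.ofReal_re]
  have ha1 : ‖a‖ < 1 := by
    rw [ha, div_lt_one hw]; nlinarith
  have hL : ‖u + a • x‖ ^ 2 = M ^ 2 + 2 * RCLike.re (a * d) + ‖a‖ ^ 2 := by
    rw [@norm_add_sq 𝕜, inner_smul_right, norm_smul, hu, hx, mul_one]
  have hR : ‖x + conj a • u‖ ^ 2 = 1 + 2 * RCLike.re (a * d) + ‖a‖ ^ 2 * M ^ 2 := by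
    rw [@norm_add_sq 𝕜, inner_smul_right, ← inner_conj_symm, ← map_mul, RCLike.conj_re,
      norm_smul, RCLike.norm_conj, hu, hx]
    ring
  have hsq : ‖u + a • x‖ ^ 2 ≤ M ^ 2 * ‖x + conj a • u‖ ^ 2 := by
    rw [← mul_pow]; exact pow_le_pow_left₀ (norm_nonneg _) (h a ha1) 2
  rw [hL, hR, ha, had] at hsq
  have hM2 : 0 < (M ^ 2 - 1) * w := mul_pos (by nlinarith) hw
  have hd0 : ‖d‖ ^ 2 * ((M ^ 2 - 1) * w) ≤ 0 := by
    field_simp at hsq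
    simp only [w] at hsq ⊢
    linarith
  simpa using nonpos_of_mul_nonpos_left hd0 hM2

theorem stmt18_general {H : Type*} [NormedAddCommGroup H] [InnerProductSpace ℂ H]
    (U : Set ℂ)
    (Φ : (ℂ → ℂ) → (H →L[ℂ] H))
    (hadd : ∀ g h : ℂ → ℂ, DifferentiableOn ℂ g U → DifferentiableOn ℂ h U →
      Φ (g + h) = Φ g + Φ h)
    (hmul : ∀ g h : ℂ → ℂ, DifferentiableOn ℂ g U → DifferentiableOn ℂ h U →
      Φ (g * h) = Φ g * Φ h)
    (hsmul : ∀ (c : ℂ) (g : ℂ → ℂ), DifferentiableOn ℂ g U → Φ (c • g) = c • Φ g)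
    (hone : Φ 1 = 1)
    (f : ℂ → ℂ) (hf : DifferentiableOn ℂ f U) (hf1 : ∀ z ∈ U, ‖f z‖ ≤ 1)
    (x : H) (hx : ‖x‖ = 1)
    (hext : ‖Φ f x‖ = sSup {r : ℝ | ∃ g : ℂ → ℂ, DifferentiableOn ℂ g U ∧
      (∀ z ∈ U, ‖g z‖ ≤ 1) ∧ r = ‖Φ g‖})
    (hbig : 1 < ‖Φ f‖) :
    inner ℂ (Φ f x) x = (0 : ℂ) := by
  set S := {r : ℝ | ∃ g : ℂ → ℂ, DifferentiableOn ℂ g U ∧ (∀ z ∈ U, ‖g z‖ ≤ 1) ∧ r = ‖Φ g‖}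
  by_cases hS : BddAbove S
  swap
  · rw [Real.sSup_of_not_bddAbove hS, norm_eq_zero] at hext
    simp [hext]
  have hM : ∀ g : ℂ → ℂ, DifferentiableOn ℂ g U → (∀ z ∈ U, ‖g z‖ ≤ 1) → ‖Φ g‖ ≤ sSup S :=
    fun g hg hg1 => le_csSup hS ⟨g, hg, hg1, rfl⟩
  refine inner_eq_zero_of_forall_norm_add_smul_le hx hext (hbig.trans_le (hM f hf hf1))
    fun a ha => ?_
  obtain ⟨g, hg, hfactor⟩ := exists_map_add_smul_one_eq_mul hadd hmul hsmul hone hM hf hf1 ha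
  calc ‖Φ f x + a • x‖ = ‖Φ g (x + conj a • Φ f x)‖ := by
        simpa using congr(‖$hfactor x‖)
    _ ≤ ‖Φ g‖ * ‖x + conj a • Φ f x‖ := (Φ g).le_opNorm _
    _ ≤ sSup S * ‖x + conj a • Φ f x‖ := by gcongr

/-- Let `T` be a bounded operator on a complex Hilbert space `H`, `U` an open
neighbourhood of the spectrum of `T`, and `Φ` a holomorphic functional calculus for `T` on `U`
(a unital algebra-homomorphic assignment `g ↦ g(T)` on functions holomorphic on `U`, sending
the identity function to `T`). If `f` is holomorphic on `U` with `sup_U |f| ≤ 1`, `x` is a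
unit vector with `‖f(T)x‖ = sup {‖g(T)‖ : g holomorphic on U, sup_U |g| ≤ 1}` (an extremal
pair), and `‖f(T)‖ > 1`, then `⟨f(T)x, x⟩ = 0`. -/
theorem stmt18 {H : Type*} [NormedAddCommGroup H] [InnerProductSpace ℂ H] [CompleteSpace H]
    (T : H →L[ℂ] H) (U : Set ℂ) (hU : IsOpen U) (hσ : spectrum ℂ T ⊆ U)
    (Φ : (ℂ → ℂ) → (H →L[ℂ] H))
    (hadd : ∀ g h : ℂ → ℂ, DifferentiableOn ℂ g U → DifferentiableOn ℂ h U →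
      Φ (g + h) = Φ g + Φ h)
    (hmul : ∀ g h : ℂ → ℂ, DifferentiableOn ℂ g U → DifferentiableOn ℂ h U →
      Φ (g * h) = Φ g * Φ h)
    (hsmul : ∀ (c : ℂ) (g : ℂ → ℂ), DifferentiableOn ℂ g U → Φ (c • g) = c • Φ g)
    (hone : Φ 1 = 1) (hid : Φ id = T)
    (f : ℂ → ℂ) (hf : DifferentiableOn ℂ f U) (hf1 : ∀ z ∈ U, ‖f z‖ ≤ 1)
    (x : H) (hx : ‖x‖ = 1)
    (hext : ‖Φ f x‖ = sSup {r : ℝ | ∃ g : ℂ → ℂ, DifferentiableOn ℂ g U ∧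
      (∀ z ∈ U, ‖g z‖ ≤ 1) ∧ r = ‖Φ g‖})
    (hbig : 1 < ‖Φ f‖) :
    inner ℂ (Φ f x) x = (0 : ℂ) :=
  stmt18_general U Φ hadd hmul hsmul hone f hf hf1 x hx hext hbig
end

section
/- Let Ω ⊆ ℂ be a compact convex set with nonempty interior such that for every p in the interior, every polynomial q, and every bounded operator S on a finite-dimensional complex Hilbert space with numerical range W(S) contained in the interior of Ω, one has ‖q(S)‖ ≤ K·sup_{z∈Ω}|q(z)|. Then for every bounded operator T on any complex Hilbert space with closure of W(T) contained in the interior of Ω, and every polynomial q, ‖q(T)‖ ≤ K·sup_{z∈Ω}|q(z)|. -/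
/-!
Fix a vector `x` and let `d = deg q`. Compressing `T` to the Krylov space
`V = span {x, Tx, …, T^d x}` gives an operator `S = P_V T|_V` on a finite-dimensional space with
`S^k x = T^k x` for `k ≤ d`, hence `q(S) x = q(T) x`. Since `⟨Sv, v⟩ = ⟨Tv, v⟩` for `v ∈ V`, the
numerical range of `S` lies in that of `T`, so the finite-dimensional hypothesis applies to `S`
and `‖q(T) x‖ = ‖q(S) x‖ ≤ ‖q(S)‖ ‖x‖ ≤ K sup_Ω |q| ‖x‖`.
-/

universe u

/-- The numerical range `W(T) = {⟨Tx, x⟩ : ‖x‖ = 1}` of a bounded operator on a complex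
inner-product space (here `⟨·,·⟩` is linear in its first argument, so `⟨Tx, x⟩` is
`inner x (T x)` in Mathlib's convention). -/
noncomputable def numericalRange {H : Type u} [NormedAddCommGroup H]
    [InnerProductSpace ℂ H] (T : H →L[ℂ] H) : Set ℂ :=
  {z : ℂ | ∃ v : H, ‖v‖ = 1 ∧ inner ℂ v (T v) = z}

open Polynomial

section Compression

variable {𝕜 E : Type*} [RCLike 𝕜] [NormedAddCommGroup E] [InnerProductSpace 𝕜 E]

noncomputable def compression (K : Submodule 𝕜 E) [K.HasOrthogonalProjection] (T : E →L[𝕜] E) :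
    K →L[𝕜] K :=
  K.orthogonalProjectionOnto ∘L T ∘L K.subtypeL

variable (K : Submodule 𝕜 E) [K.HasOrthogonalProjection] (T : E →L[𝕜] E)

theorem coe_compression_apply_of_mem {v : K} (h : T v ∈ K) : (compression K T v : E) = T v :=
  congrArg Subtype.val (K.orthogonalProjectionOnto_mem_subspace_eq_self ⟨T v, h⟩)

theorem inner_compression_apply (v : K) : inner 𝕜 v (compression K T v) = inner 𝕜 (v : E) (T v) :=
  K.inner_orthogonalProjectionOnto_eq_of_mem_left v (T v)

end Compression

theorem numericalRange_compression_subset {H : Type u} [NormedAddCommGroup H]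
    [InnerProductSpace ℂ H] (K : Submodule ℂ H) [K.HasOrthogonalProjection] (T : H →L[ℂ] H) :
    numericalRange (compression K T) ⊆ numericalRange T := by
  rintro z ⟨v, hv, rfl⟩
  exact ⟨v, by rwa [Submodule.norm_coe], (inner_compression_apply K T v).symm⟩

section Krylov

variable {𝕜 E : Type*} [RCLike 𝕜] [NormedAddCommGroup E] [InnerProductSpace 𝕜 E]

def krylovSubspace (T : E →L[𝕜] E) (x : E) (d : ℕ) : Submodule 𝕜 E :=
  Submodule.span 𝕜 ((fun k => (T ^ k) x) '' Set.Iic d)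

variable (T : E →L[𝕜] E) (x : E) (d : ℕ)

instance : FiniteDimensional 𝕜 (krylovSubspace T x d) :=
  FiniteDimensional.span_of_finite 𝕜 ((Set.finite_Iic d).image _)

theorem pow_apply_mem_krylovSubspace {k : ℕ} (hk : k ≤ d) : (T ^ k) x ∈ krylovSubspace T x d :=
  Submodule.subset_span ⟨k, hk, rfl⟩

theorem self_mem_krylovSubspace : x ∈ krylovSubspace T x d := by
  simpa using pow_apply_mem_krylovSubspace T x d (Nat.zero_le d)

theorem coe_compression_krylovSubspace_pow_apply {k : ℕ} (hk : k ≤ d) :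
    ((compression (krylovSubspace T x d) T ^ k) ⟨x, self_mem_krylovSubspace T x d⟩ : E) =
      (T ^ k) x := by
  induction k with
  | zero => rfl
  | succ k ih =>
    have ih := ih (Nat.le_of_succ_le hk)
    have hTk : T ((T ^ k) x) ∈ krylovSubspace T x d := by
      simpa [pow_succ'] using pow_apply_mem_krylovSubspace T x d hk
    rw [pow_succ', mul_apply_eq_comp, coe_compression_apply_of_mem _ _ (ih ▸ hTk), ih,
      pow_succ', mul_apply_eq_comp]

theorem coe_aeval_compression_krylovSubspace_apply (p : 𝕜[X]) :
    (aeval (compression (krylovSubspace T x p.natDegree) T) p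
        ⟨x, self_mem_krylovSubspace T x p.natDegree⟩ : E) = aeval T p x := by
  simp only [aeval_eq_sum_range, sum_apply, smul_apply,
    Submodule.coe_sum, Submodule.coe_smul]
  refine Finset.sum_congr rfl fun k hk => ?_
  rw [coe_compression_krylovSubspace_pow_apply T x _ (Nat.lt_succ_iff.mp (Finset.mem_range.mp hk))]

end Krylov

theorem stmt19_general (Ω : Set ℂ) (K : ℝ) (hK : 0 < K)
    (hfin : ∀ (H' : Type u) [NormedAddCommGroup H'] [InnerProductSpace ℂ H']
      [FiniteDimensional ℂ H'] (S : H' →L[ℂ] H') (q : Polynomial ℂ),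
      numericalRange S ⊆ interior Ω →
      ‖(Polynomial.aeval S) q‖ ≤ K * sSup ((fun z => ‖Polynomial.eval z q‖) '' Ω))
    {H : Type u} [NormedAddCommGroup H] [InnerProductSpace ℂ H]
    (T : H →L[ℂ] H) (q : Polynomial ℂ)
    (hW : closure (numericalRange T) ⊆ interior Ω) :
    ‖(Polynomial.aeval T) q‖ ≤ K * sSup ((fun z => ‖Polynomial.eval z q‖) '' Ω) := by
  have hbound_nonneg : 0 ≤ K * sSup ((fun z => ‖Polynomial.eval z q‖) '' Ω) :=
    mul_nonneg hK.le (Real.sSup_nonneg (by rintro _ ⟨z, -, rfl⟩; exact norm_nonneg _))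
  refine ContinuousLinearMap.opNorm_le_bound _ hbound_nonneg fun x => ?_
  set S := compression (krylovSubspace T x q.natDegree) T
  have hS : numericalRange S ⊆ interior Ω :=
    (numericalRange_compression_subset _ T).trans (subset_closure.trans hW)
  calc ‖aeval T q x‖ = ‖aeval S q ⟨x, self_mem_krylovSubspace T x q.natDegree⟩‖ := by
        rw [← coe_aeval_compression_krylovSubspace_apply, Submodule.norm_coe]
    _ ≤ ‖aeval S q‖ * ‖x‖ := (aeval S q).le_opNorm _
    _ ≤ _ := mul_le_mul_of_nonneg_right (hfin _ S q hS) (norm_nonneg x)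

/-- if for every operator `S` on a finite-dimensional complex Hilbert space with
numerical range contained in the interior of a compact convex set `Ω` (with nonempty interior)
one has `‖q(S)‖ ≤ K · sup_Ω |q|` for all polynomials `q`, then the same bound holds for every
operator `T` on an arbitrary complex Hilbert space whose closure of the numerical range is
contained in the interior of `Ω`. -/
theorem stmt19 (Ω : Set ℂ) (hΩc : IsCompact Ω) (hΩconv : Convex ℝ Ω)
    (hΩint : (interior Ω).Nonempty) (K : ℝ) (hK : 0 < K)
    (hfin : ∀ (H' : Type u) [NormedAddCommGroup H'] [InnerProductSpace ℂ H']
      [FiniteDimensional ℂ H'] (S : H' →L[ℂ] H') (q : Polynomial ℂ),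
      numericalRange S ⊆ interior Ω →
      ‖(Polynomial.aeval S) q‖ ≤ K * sSup ((fun z => ‖Polynomial.eval z q‖) '' Ω))
    {H : Type u} [NormedAddCommGroup H] [InnerProductSpace ℂ H] [CompleteSpace H]
    (T : H →L[ℂ] H) (q : Polynomial ℂ)
    (hW : closure (numericalRange T) ⊆ interior Ω) :
    ‖(Polynomial.aeval T) q‖ ≤ K * sSup ((fun z => ‖Polynomial.eval z q‖) '' Ω) :=
  stmt19_general Ω K hK hfin T q hW
end
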